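/- arXiv:0906.3886 — 8 statements merged into one kernel-verified Lean document; each statement's English description precedes it below -/
import Mathlib

section
/- If Y is a nonnegative random variable with mean μ ∈ (0,∞) and variance σ² ∈ (0,∞), and Y^s is defined on the same probability space with the Y size-biased distribution, satisfying Y^s ≥ Y and Y^s - Y ≤ C almost surely for some constant C > 0, then for all t > 0, P((Y-μ)/σ ≤ -t) ≤ exp(-t²σ²/(2Cμ)). -/
/-!
A Herbst-type argument on the Laplace transform `m(u) = E[exp (u Y)]`, `u ≤ 0`. Size biasing
gives `m'(u) = E[Y exp (u Y)] = μ E[exp (u Yˢ)] ≥ μ exp (C u) m(u) ≥ μ (1 + C u) m(u)`, since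
`Yˢ ≤ Y + C`. Integrating this differential inequality from `u` up to `0`, where `m(0) = 1`,
gives `m(u) ≤ exp (μ u + C μ u² / 2)`, and the Chernoff bound with `u = -tσ / (C μ)` bounds
`P(Y ≤ μ - tσ)` by `exp (-t² σ² / (2 C μ))`.
-/

open MeasureTheory ProbabilityTheory Real Set

lemma le_mul_exp_sub_of_hasDerivAt_ge {f f' φ φ' : ℝ → ℝ} {b : ℝ}
    (hf : ContinuousOn f (Iic b)) (hf' : ∀ t < b, HasDerivAt f (f' t) t)
    (hφ : ∀ t, HasDerivAt φ (φ' t) t) (hle : ∀ t < b, φ' t * f t ≤ f' t)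
    {t : ℝ} (ht : t ≤ b) : f t ≤ f b * exp (φ t - φ b) := by
  set g : ℝ → ℝ := fun s => f s * exp (-φ s)
  have hg' : ∀ s < b, HasDerivAt g ((f' s - φ' s * f s) * exp (-φ s)) s := fun s hs =>
    ((hf' s hs).mul (hφ s).neg.exp).congr_deriv (by simp only [Pi.neg_apply]; ring)
  have hmono : MonotoneOn g (Iic b) := by
    refine monotoneOn_of_hasDerivWithinAt_nonneg (f' := fun s => (f' s - φ' s * f s) * exp (-φ s))
      (convex_Iic b)
      (hf.mul (continuous_exp.comp (continuous_iff_continuousAt.2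
        fun s => (hφ s).continuousAt).neg).continuousOn) (fun s hs => ?_) fun s hs => ?_
    · rw [interior_Iic] at hs ⊢
      exact (hg' s hs).hasDerivWithinAt
    · rw [interior_Iic] at hs
      exact mul_nonneg (sub_nonneg.2 (hle s hs)) (exp_pos _).le
  have hgt : f t * exp (-φ t) ≤ f b * exp (-φ b) := hmono ht self_mem_Iic ht
  calc f t = f t * exp (-φ t) * exp (φ t) := by rw [mul_assoc, ← exp_add]; simp
    _ ≤ f b * exp (-φ b) * exp (φ t) := by gcongr
    _ = f b * exp (φ t - φ b) := by rw [mul_assoc, ← exp_add]; ring_nf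

section NonnegMGF

variable {Ω : Type*} [MeasurableSpace Ω] {P : Measure Ω} {X : Ω → ℝ}

lemma ae_norm_exp_mul_le_one_of_nonneg (hX : ∀ᵐ ω ∂P, 0 ≤ X ω) {t : ℝ} (ht : t ≤ 0) :
    ∀ᵐ ω ∂P, ‖exp (t * X ω)‖ ≤ 1 := by
  filter_upwards [hX] with ω hω
  rw [norm_of_nonneg (exp_pos _).le, exp_le_one_iff]
  exact mul_nonpos_of_nonpos_of_nonneg ht hω

lemma integrable_exp_mul_of_nonneg_of_nonpos [IsFiniteMeasure P] (hXm : AEMeasurable X P)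
    (hX : ∀ᵐ ω ∂P, 0 ≤ X ω) {t : ℝ} (ht : t ≤ 0) :
    Integrable (fun ω => exp (t * X ω)) P :=
  (integrable_const 1).mono'
    (measurable_exp.comp_aemeasurable (hXm.const_mul t)).aestronglyMeasurable
    (ae_norm_exp_mul_le_one_of_nonneg hX ht)

lemma hasDerivAt_mgf_of_nonneg [IsFiniteMeasure P] (hXm : AEMeasurable X P)
    (hX : ∀ᵐ ω ∂P, 0 ≤ X ω) {t : ℝ} (ht : t < 0) :
    HasDerivAt (mgf X P) (P[fun ω => X ω * exp (t * X ω)]) t := by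
  refine hasDerivAt_mgf (interior_mono (fun s hs => ?_) (by rwa [interior_Iic]))
  exact integrable_exp_mul_of_nonneg_of_nonpos hXm hX (mem_Iic.1 hs)

lemma continuousOn_mgf_Iic_of_nonneg [IsFiniteMeasure P] (hXm : AEMeasurable X P)
    (hX : ∀ᵐ ω ∂P, 0 ≤ X ω) :
    ContinuousOn (mgf X P) (Iic 0) := by
  refine continuousOn_of_dominated (bound := fun _ => 1)
    (fun t ht => (integrable_exp_mul_of_nonneg_of_nonpos hXm hX ht).aestronglyMeasurable)
    (fun t ht => ae_norm_exp_mul_le_one_of_nonneg hX ht) (integrable_const 1)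
    (ae_of_all _ fun ω => by fun_prop)

end NonnegMGF

def IsSizeBiased {Ω : Type*} [MeasurableSpace Ω] (P : Measure Ω) (Y Ys : Ω → ℝ) (μ : ℝ) : Prop :=
  ∀ f : ℝ → ℝ, Integrable (fun ω => Y ω * f (Y ω)) P →
    Integrable (fun ω => f (Ys ω)) P → ∫ ω, Y ω * f (Y ω) ∂P = μ * ∫ ω, f (Ys ω) ∂P

section SizeBias

variable {Ω : Type*} [MeasurableSpace Ω] {P : Measure Ω} {Y Ys : Ω → ℝ} {μ C : ℝ}

lemma IsSizeBiased.mul_exp_mul_mgf_le [IsFiniteMeasure P] (hsb : IsSizeBiased P Y Ys μ) (hμ : 0 ≤ μ)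
    (hY : Integrable Y P) (hYs : AEMeasurable Ys P) (hYnonneg : ∀ᵐ ω ∂P, 0 ≤ Y ω)
    (hYsnonneg : ∀ᵐ ω ∂P, 0 ≤ Ys ω) (hbdd : ∀ᵐ ω ∂P, Ys ω - Y ω ≤ C) {t : ℝ} (ht : t ≤ 0) :
    μ * exp (C * t) * mgf Y P t ≤ P[fun ω => Y ω * exp (t * Y ω)] := by
  have hexpY := integrable_exp_mul_of_nonneg_of_nonpos hY.aemeasurable hYnonneg ht
  have hexpYs := integrable_exp_mul_of_nonneg_of_nonpos hYs hYsnonneg ht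
  have hYexpY : Integrable (fun ω => Y ω * exp (t * Y ω)) P :=
    hY.mul_bdd hexpY.aestronglyMeasurable (ae_norm_exp_mul_le_one_of_nonneg hYnonneg ht)
  calc μ * exp (C * t) * mgf Y P t = μ * ∫ ω, exp (t * (Y ω + C)) ∂P := by
        rw [mgf, ← integral_const_mul, ← integral_const_mul]
        congr 1 with ω
        rw [mul_add, exp_add]
        ring_nf
    _ ≤ μ * ∫ ω, exp (t * Ys ω) ∂P := by
        refine mul_le_mul_of_nonneg_left (integral_mono_ae ?_ hexpYs ?_) hμ
        · simpa only [mul_add, exp_add] using hexpY.mul_const (exp (t * C))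
        · filter_upwards [hbdd] with ω hω
          exact exp_le_exp.2 (mul_le_mul_of_nonpos_left (by linarith) ht)
    _ = P[fun ω => Y ω * exp (t * Y ω)] := (hsb (fun x => exp (t * x)) hYexpY hexpYs).symm

lemma IsSizeBiased.mgf_le [IsProbabilityMeasure P] (hsb : IsSizeBiased P Y Ys μ) (hμ : 0 ≤ μ)
    (hY : Integrable Y P) (hYs : AEMeasurable Ys P) (hYnonneg : ∀ᵐ ω ∂P, 0 ≤ Y ω)
    (hYsnonneg : ∀ᵐ ω ∂P, 0 ≤ Ys ω) (hbdd : ∀ᵐ ω ∂P, Ys ω - Y ω ≤ C) {t : ℝ} (ht : t ≤ 0) :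
    mgf Y P t ≤ exp (μ * t + C * μ * t ^ 2 / 2) := by
  have hφ : ∀ s : ℝ, HasDerivAt (fun s => μ * s + C * μ * s ^ 2 / 2) (μ * (1 + C * s)) s :=
    fun s => (((hasDerivAt_id s).const_mul μ).add
      (((hasDerivAt_pow 2 s).const_mul (C * μ)).div_const 2)).congr_deriv (by simp; ring)
  have hle : ∀ s < 0, μ * (1 + C * s) * mgf Y P s ≤ P[fun ω => Y ω * exp (s * Y ω)] :=
    fun s hs => calc
      μ * (1 + C * s) * mgf Y P s ≤ μ * exp (C * s) * mgf Y P s := by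
        gcongr
        · exact mgf_nonneg
        · linarith [add_one_le_exp (C * s)]
      _ ≤ _ := hsb.mul_exp_mul_mgf_le hμ hY hYs hYnonneg hYsnonneg hbdd hs.le
  simpa [mgf_zero] using le_mul_exp_sub_of_hasDerivAt_ge
    (continuousOn_mgf_Iic_of_nonneg hY.aemeasurable hYnonneg)
    (fun s hs => hasDerivAt_mgf_of_nonneg hY.aemeasurable hYnonneg hs) hφ hle ht

end SizeBias

theorem sizeBias_left_tail_general {Ω : Type*} [MeasurableSpace Ω] (P : Measure Ω)
    [IsProbabilityMeasure P] (Y Ys : Ω → ℝ) (μ σ C : ℝ)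
    (hμ : 0 < μ) (hσ : 0 < σ) (hC : 0 < C)
    (hYmeas : Measurable Y) (hYsmeas : Measurable Ys)
    (hYnonneg : ∀ ω, 0 ≤ Y ω)
    (hmean : ∫ ω, Y ω ∂P = μ)
    (hsb : ∀ f : ℝ → ℝ, Integrable (fun ω => Y ω * f (Y ω)) P →
      Integrable (fun ω => f (Ys ω)) P →
      ∫ ω, Y ω * f (Y ω) ∂P = μ * ∫ ω, f (Ys ω) ∂P)
    (hmono : ∀ᵐ ω ∂P, Y ω ≤ Ys ω)
    (hbdd : ∀ᵐ ω ∂P, Ys ω - Y ω ≤ C) :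
    ∀ t > 0, (P {ω | (Y ω - μ) / σ ≤ -t}).toReal ≤
      Real.exp (-(t ^ 2 * σ ^ 2) / (2 * C * μ)) := by
  intro t ht
  have hY : Integrable Y P := .of_integral_ne_zero (hmean ▸ hμ.ne')
  -- the minimiser of the Chernoff exponent `-s (μ - tσ) + μ s + C μ s² / 2`
  set s := -(t * σ / (C * μ))
  have hs : s ≤ 0 := neg_nonpos.2 (by positivity)
  have htail : {ω | (Y ω - μ) / σ ≤ -t} = {ω | Y ω ≤ μ - t * σ} := by
    ext ω
    simp only [mem_ofPred_eq, div_le_iff₀ hσ]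
    constructor <;> intro <;> linarith
  calc (P {ω | (Y ω - μ) / σ ≤ -t}).toReal = P.real {ω | Y ω ≤ μ - t * σ} := by rw [htail]; rfl
    _ ≤ exp (-s * (μ - t * σ)) * mgf Y P s := measure_le_le_exp_mul_mgf _ hs
        (integrable_exp_mul_of_nonneg_of_nonpos hYmeas.aemeasurable (ae_of_all _ hYnonneg) hs)
    _ ≤ exp (-s * (μ - t * σ)) * exp (μ * s + C * μ * s ^ 2 / 2) := by
        gcongr
        exact IsSizeBiased.mgf_le hsb hμ.le hY hYsmeas.aemeasurable (ae_of_all _ hYnonneg)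
          (hmono.mono fun ω h => (hYnonneg ω).trans h) hbdd hs
    _ = exp (-(t ^ 2 * σ ^ 2) / (2 * C * μ)) := by
        rw [← exp_add]
        congr 1
        simp only [s]
        field_simp
        ring

/-- Left tail concentration bound via a bounded monotone size-bias coupling. -/
theorem sizeBias_left_tail {Ω : Type*} [MeasurableSpace Ω] (P : Measure Ω)
    [IsProbabilityMeasure P] (Y Ys : Ω → ℝ) (μ σ C : ℝ)
    (hμ : 0 < μ) (hσ : 0 < σ) (hC : 0 < C)
    (hYmeas : Measurable Y) (hYsmeas : Measurable Ys)
    (hYnonneg : ∀ ω, 0 ≤ Y ω)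
    (hmean : ∫ ω, Y ω ∂P = μ)
    (hvar : ∫ ω, (Y ω - μ) ^ 2 ∂P = σ ^ 2)
    (hsb : ∀ f : ℝ → ℝ, Integrable (fun ω => Y ω * f (Y ω)) P →
      Integrable (fun ω => f (Ys ω)) P →
      ∫ ω, Y ω * f (Y ω) ∂P = μ * ∫ ω, f (Ys ω) ∂P)
    (hmono : ∀ᵐ ω ∂P, Y ω ≤ Ys ω)
    (hbdd : ∀ᵐ ω ∂P, Ys ω - Y ω ≤ C) :
    ∀ t > 0, (P {ω | (Y ω - μ) / σ ≤ -t}).toReal ≤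
      Real.exp (-(t ^ 2 * σ ^ 2) / (2 * C * μ)) :=
  sizeBias_left_tail_general P Y Ys μ σ C hμ hσ hC hYmeas hYsmeas hYnonneg hmean hsb hmono hbdd
end

section
/- If Y is a nonnegative random variable with mean μ ∈ (0,∞) and variance σ² ∈ (0,∞), Y^s is defined on the same space with the Y size-biased distribution, |Y^s - Y| ≤ C almost surely for some C > 0, and the moment generating function m(θ) = E[e^{θY}] is finite at θ = 2/C, then for all t > 0, P((Y-μ)/σ ≥ t) ≤ exp(-t²/(2(A + Bt))) where A = Cμ/σ² and B = C/(2σ). -/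
/-!
Herbst's argument with a size-bias coupling. Applying the size-bias identity to `y ↦ exp (s y)`
and using `Ys ≤ Y + C` gives the differential inequality `m'(s) ≤ μ e^{sC} m(s)` for the moment
generating function `m` of `Y`, which integrates to `m(θ) ≤ exp (μ (e^{θC} - 1) / C)` for
`0 ≤ θ < 2/C`. At `θ = 2x / (C (2μ + x))` the Padé bound `e^u ≤ (2 + u) / (2 - u)` turns
`e^{θC} - 1` into `x / μ`, and Chernoff's bound gives `P(Y ≥ μ + x) ≤ exp (-x² / (C (2μ + x)))`;
the theorem is the case `x = σ t`.
-/

open MeasureTheory ProbabilityTheory Real Set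

/-- Grönwall's inequality for a variable rate: `f' ≤ g' f` forces `f e^{-g}` to decrease. -/
theorem le_mul_exp_sub_of_hasDerivAt_le_mul {f f' g g' : ℝ → ℝ} {a b : ℝ} (hab : a ≤ b)
    (hf : ∀ x ∈ Icc a b, HasDerivAt f (f' x) x) (hg : ∀ x ∈ Icc a b, HasDerivAt g (g' x) x)
    (hle : ∀ x ∈ Ioo a b, f' x ≤ g' x * f x) :
    f b ≤ f a * exp (g b - g a) := by
  set h : ℝ → ℝ := fun x => f x * exp (-g x)
  have hh : ∀ x ∈ Icc a b, HasDerivAt h ((f' x - g' x * f x) * exp (-g x)) x := fun x hx =>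
    ((hf x hx).mul (hg x hx).neg.exp).congr_deriv (by simp only [Pi.neg_apply]; ring)
  have hanti : AntitoneOn h (Icc a b) := by
    refine antitoneOn_of_deriv_nonpos (convex_Icc a b)
      (fun x hx => (hh x hx).continuousAt.continuousWithinAt) (fun x hx => ?_) (fun x hx => ?_)
    all_goals rw [interior_Icc] at hx
    · exact (hh x (Ioo_subset_Icc_self hx)).differentiableAt.differentiableWithinAt
    · rw [(hh x (Ioo_subset_Icc_self hx)).deriv]
      exact mul_nonpos_of_nonpos_of_nonneg (sub_nonpos.mpr (hle x hx)) (exp_pos _).le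
  calc f b = h b * exp (g b) := by
        simp only [h, mul_assoc, ← exp_add, neg_add_cancel, exp_zero, mul_one]
    _ ≤ h a * exp (g b) := by
        gcongr
        exact hanti (left_mem_Icc.mpr hab) (right_mem_Icc.mpr hab) hab
    _ = f a * exp (g b - g a) := by simp only [h, mul_assoc, ← exp_add, neg_add_eq_sub]

section SizeBias

variable {Ω : Type*} [MeasurableSpace Ω] {P : Measure Ω}

lemma Iic_subset_integrableExpSet [IsFiniteMeasure P] {X : Ω → ℝ} {c : ℝ}
    (hX : AEMeasurable X P) (hX0 : ∀ᵐ ω ∂P, 0 ≤ X ω) (hc : c ∈ integrableExpSet X P) :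
    Iic c ⊆ integrableExpSet X P := by
  intro s hs
  have hneg : min s 0 ∈ integrableExpSet X P := by
    refine Integrable.of_mem_Icc 0 1 (measurable_exp.comp_aemeasurable (hX.const_mul _)) ?_
    filter_upwards [hX0] with ω hω
    exact ⟨(exp_pos _).le,
      exp_le_one_iff.mpr (mul_nonpos_of_nonpos_of_nonneg (min_le_right _ _) hω)⟩
  exact integrable_exp_mul_of_le_of_le hneg hc (min_le_left _ _) hs

lemma Iio_subset_interior_integrableExpSet [IsFiniteMeasure P] {X : Ω → ℝ} {c : ℝ}
    (hX : AEMeasurable X P) (hX0 : ∀ᵐ ω ∂P, 0 ≤ X ω) (hc : c ∈ integrableExpSet X P) :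
    Iio c ⊆ interior (integrableExpSet X P) := by
  simpa using interior_mono (Iic_subset_integrableExpSet hX hX0 hc)

variable {Y Ys : Ω → ℝ} {μ C : ℝ}

lemma integral_mul_exp_le_of_isSizeBiased {s : ℝ} (hsb : IsSizeBiased P Y Ys μ) (hμ : 0 ≤ μ)
    (hYs : AEMeasurable Ys P) (hbdd : ∀ᵐ ω ∂P, Ys ω ≤ Y ω + C) (hs : 0 ≤ s)
    (hYexp : Integrable (fun ω => Y ω * exp (s * Y ω)) P)
    (hexp : Integrable (fun ω => exp (s * Y ω)) P) :
    ∫ ω, Y ω * exp (s * Y ω) ∂P ≤ μ * exp (s * C) * mgf Y P s := by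
  have hle : ∀ᵐ ω ∂P, exp (s * Ys ω) ≤ exp (s * C) * exp (s * Y ω) := by
    filter_upwards [hbdd] with ω hω
    rw [← exp_add, exp_le_exp]
    nlinarith
  have hexpYs : Integrable (fun ω => exp (s * Ys ω)) P := by
    refine (hexp.const_mul (exp (s * C))).mono' (aemeasurable_exp_mul s hYs) ?_
    filter_upwards [hle] with ω hω
    rwa [norm_of_nonneg (exp_pos _).le]
  rw [hsb (fun y => exp (s * y)) hYexp hexpYs, mul_assoc, mgf,
    ← integral_const_mul (exp (s * C))]
  exact mul_le_mul_of_nonneg_left (integral_mono_ae hexpYs (hexp.const_mul _) hle) hμ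

theorem mgf_le_exp_of_isSizeBiased [IsProbabilityMeasure P] {c θ : ℝ}
    (hsb : IsSizeBiased P Y Ys μ) (hμ : 0 ≤ μ) (hC : 0 < C) (hY : AEMeasurable Y P)
    (hYs : AEMeasurable Ys P) (hY0 : ∀ᵐ ω ∂P, 0 ≤ Y ω) (hbdd : ∀ᵐ ω ∂P, Ys ω ≤ Y ω + C)
    (hc : Integrable (fun ω => exp (c * Y ω)) P) (hθ0 : 0 ≤ θ) (hθc : θ < c) :
    mgf Y P θ ≤ exp (μ / C * (exp (θ * C) - 1)) := by
  have hint : Iio c ⊆ interior (integrableExpSet Y P) :=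
    Iio_subset_interior_integrableExpSet hY hY0 hc
  have hg (s : ℝ) : HasDerivAt (fun s => μ / C * exp (s * C)) (μ * exp (s * C)) s :=
    ((hasDerivAt_mul_const C).exp.const_mul (μ / C)).congr_deriv (by field_simp)
  have hgronwall := le_mul_exp_sub_of_hasDerivAt_le_mul hθ0 (f := mgf Y P)
    (fun s hs => hasDerivAt_mgf (hint (hs.2.trans_lt hθc))) (fun s _ => hg s) fun s hs => by
      have hs' := hint (hs.2.trans hθc)
      refine integral_mul_exp_le_of_isSizeBiased hsb hμ hYs hbdd hs.1.le ?_ (interior_subset hs' :)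
      simpa using integrable_pow_mul_exp_of_mem_interior_integrableExpSet hs' 1
  simpa [mgf_zero, mul_sub] using hgronwall

theorem measureReal_ge_le_of_isSizeBiased [IsProbabilityMeasure P] {x : ℝ}
    (hsb : IsSizeBiased P Y Ys μ) (hμ : 0 < μ) (hC : 0 < C) (hY : AEMeasurable Y P)
    (hYs : AEMeasurable Ys P) (hY0 : ∀ᵐ ω ∂P, 0 ≤ Y ω) (hbdd : ∀ᵐ ω ∂P, Ys ω ≤ Y ω + C)
    (hmgf : Integrable (fun ω => exp (2 / C * Y ω)) P) (hx : 0 < x) :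
    P.real {ω | μ + x ≤ Y ω} ≤ exp (-x ^ 2 / (C * (2 * μ + x))) := by
  set θ := 2 * x / (C * (2 * μ + x)) with hθ
  have hθC : θ * C = 2 * x / (2 * μ + x) := by rw [hθ]; field_simp
  have hθ0 : 0 ≤ θ := by positivity
  have hθc : θ < 2 / C := by
    rw [div_lt_div_iff₀ (by positivity) hC]
    nlinarith
  have hpade : exp (θ * C) ≤ 1 + x / μ :=
    calc exp (θ * C) ≤ (2 + θ * C) / (2 - θ * C) :=
          exp_le_two_add_div_two_sub (by positivity)
            (by rw [hθC, div_lt_iff₀ (by positivity)]; linarith)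
      _ = 1 + x / μ := by rw [hθC]; field_simp; ring
  calc P.real {ω | μ + x ≤ Y ω} ≤ exp (-θ * (μ + x)) * mgf Y P θ :=
        measure_ge_le_exp_mul_mgf _ hθ0 (integrable_exp_mul_of_nonneg_of_le hmgf hθ0 hθc.le)
    _ ≤ exp (-θ * (μ + x)) * exp (μ / C * (exp (θ * C) - 1)) := by
        gcongr
        exact mgf_le_exp_of_isSizeBiased hsb hμ.le hC hY hYs hY0 hbdd hmgf hθ0 hθc
    _ ≤ exp (-θ * (μ + x)) * exp (x / C) := by
        gcongr
        calc μ / C * (exp (θ * C) - 1) ≤ μ / C * (x / μ) := by gcongr; linarith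
          _ = x / C := by field_simp
    _ = exp (-x ^ 2 / (C * (2 * μ + x))) := by
        rw [← exp_add]
        congr 1
        rw [hθ]
        field_simp
        ring

end SizeBias

theorem sizeBias_right_tail_general {Ω : Type*} [MeasurableSpace Ω] (P : Measure Ω)
    [IsProbabilityMeasure P] (Y Ys : Ω → ℝ) (μ σ C : ℝ)
    (hμ : 0 < μ) (hσ : 0 < σ) (hC : 0 < C)
    (hYmeas : Measurable Y) (hYsmeas : Measurable Ys)
    (hYnonneg : ∀ ω, 0 ≤ Y ω)
    (hsb : ∀ f : ℝ → ℝ, Integrable (fun ω => Y ω * f (Y ω)) P →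
      Integrable (fun ω => f (Ys ω)) P →
      ∫ ω, Y ω * f (Y ω) ∂P = μ * ∫ ω, f (Ys ω) ∂P)
    (hbdd : ∀ᵐ ω ∂P, |Ys ω - Y ω| ≤ C)
    (hmgf : Integrable (fun ω => Real.exp ((2 / C) * Y ω)) P) :
    ∀ t > 0, (P {ω | (Y ω - μ) / σ ≥ t}).toReal ≤
      Real.exp (-t ^ 2 / (2 * (C * μ / σ ^ 2 + (C / (2 * σ)) * t))) := by
  intro t ht
  have hYs_le : ∀ᵐ ω ∂P, Ys ω ≤ Y ω + C := by
    filter_upwards [hbdd] with ω hω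
    linarith [(abs_le.mp hω).2]
  have hset : {ω | (Y ω - μ) / σ ≥ t} = {ω | μ + σ * t ≤ Y ω} := by
    ext ω
    simp only [mem_ofPred_eq, ge_iff_le, le_div_iff₀ hσ]
    constructor <;> intro h <;> linarith
  rw [hset, ← measureReal_def]
  convert measureReal_ge_le_of_isSizeBiased hsb hμ hC hYmeas.aemeasurable
    hYsmeas.aemeasurable (ae_of_all _ hYnonneg) hYs_le hmgf (mul_pos hσ ht) using 2
  field_simp

/-- Right tail concentration bound via a bounded size-bias coupling,
assuming the moment generating function is finite at `2/C`. -/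
theorem sizeBias_right_tail {Ω : Type*} [MeasurableSpace Ω] (P : Measure Ω)
    [IsProbabilityMeasure P] (Y Ys : Ω → ℝ) (μ σ C : ℝ)
    (hμ : 0 < μ) (hσ : 0 < σ) (hC : 0 < C)
    (hYmeas : Measurable Y) (hYsmeas : Measurable Ys)
    (hYnonneg : ∀ ω, 0 ≤ Y ω)
    (hmean : ∫ ω, Y ω ∂P = μ)
    (hvar : ∫ ω, (Y ω - μ) ^ 2 ∂P = σ ^ 2)
    (hsb : ∀ f : ℝ → ℝ, Integrable (fun ω => Y ω * f (Y ω)) P →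
      Integrable (fun ω => f (Ys ω)) P →
      ∫ ω, Y ω * f (Y ω) ∂P = μ * ∫ ω, f (Ys ω) ∂P)
    (hbdd : ∀ᵐ ω ∂P, |Ys ω - Y ω| ≤ C)
    (hmgf : Integrable (fun ω => Real.exp ((2 / C) * Y ω)) P) :
    ∀ t > 0, (P {ω | (Y ω - μ) / σ ≥ t}).toReal ≤
      Real.exp (-t ^ 2 / (2 * (C * μ / σ ^ 2 + (C / (2 * σ)) * t))) :=
  sizeBias_right_tail_general P Y Ys μ σ C hμ hσ hC hYmeas hYsmeas hYnonneg hsb hbdd hmgf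
end

section
/- Suppose Y ≥ 0 has mean μ ∈ (0,∞), that Y^s has the Y size-biased distribution coupled on the same space with |Y^s - Y| ≤ C a.s., and that m(θ) = E[e^{θY}] < ∞ for 0 < θ < 2/C. Then for all 0 < θ < 2/C, E[e^{θ Y^s}] ≤ ((1 + Cθ/2)/(1 - Cθ/2)) E[e^{θY}]. -/
open MeasureTheory

/-!
Almost surely `θ Ys ≤ θ C + θ Y`, so `E e^{θ Ys} ≤ e^{θ C} E e^{θ Y}`. The factor `e^{θ C}` is at most
`(1 + Cθ/2) / (1 - Cθ/2)` since `log ((1 + t) / (1 - t)) = 2 (t + t³/3 + t⁵/5 + ⋯) ≥ 2t` for `0 ≤ t < 1`.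
-/

theorem Real.two_mul_le_log_one_add_sub_log_one_sub {t : ℝ} (ht₀ : 0 ≤ t) (ht₁ : t < 1) :
    2 * t ≤ Real.log (1 + t) - Real.log (1 - t) := by
  have hsum := Real.hasSum_log_sub_log_of_abs_lt_one (abs_lt.2 ⟨by linarith, ht₁⟩)
  simpa using le_hasSum hsum 0 fun _ _ => by positivity

theorem Real.exp_le_one_add_div_one_sub {x : ℝ} (hx₀ : 0 ≤ x) (hx₂ : x < 2) :
    Real.exp x ≤ (1 + x / 2) / (1 - x / 2) := by
  have hlog := Real.two_mul_le_log_one_add_sub_log_one_sub (t := x / 2) (by linarith) (by linarith)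
  rw [← Real.log_div (by linarith) (by linarith), mul_div_cancel₀ x two_ne_zero] at hlog
  calc Real.exp x ≤ Real.exp (Real.log ((1 + x / 2) / (1 - x / 2))) := Real.exp_le_exp.2 hlog
    _ = (1 + x / 2) / (1 - x / 2) := Real.exp_log (div_pos (by linarith) (by linarith))

theorem MeasureTheory.integral_exp_mul_le_of_sub_le {Ω : Type*} [MeasurableSpace Ω]
    {P : Measure Ω} {X Z : Ω → ℝ} {θ C : ℝ} (hθ : 0 ≤ θ) (hZ : AEStronglyMeasurable Z P)
    (hX : Integrable (fun ω => Real.exp (θ * X ω)) P) (hZX : ∀ᵐ ω ∂P, Z ω - X ω ≤ C) :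
    ∫ ω, Real.exp (θ * Z ω) ∂P ≤ Real.exp (θ * C) * ∫ ω, Real.exp (θ * X ω) ∂P := by
  have hpt : ∀ᵐ ω ∂P, Real.exp (θ * Z ω) ≤ Real.exp (θ * C) * Real.exp (θ * X ω) := by
    filter_upwards [hZX] with ω hω
    rw [← Real.exp_add]
    exact Real.exp_le_exp.2 (by nlinarith)
  have hXC := hX.const_mul (Real.exp (θ * C))
  have hZint : Integrable (fun ω => Real.exp (θ * Z ω)) P := by
    refine hXC.mono' (by fun_prop) ?_
    filter_upwards [hpt] with ω hω
    rwa [Real.norm_of_nonneg (Real.exp_pos _).le]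
  rw [← integral_const_mul]
  exact integral_mono_ae hZint hXC hpt

theorem sizeBias_mgf_upper_general {Ω : Type*} [MeasurableSpace Ω] (P : Measure Ω)
    (Y Ys : Ω → ℝ) (C : ℝ)
    (hYsmeas : Measurable Ys)
    (hbdd : ∀ᵐ ω ∂P, |Ys ω - Y ω| ≤ C)
    (hmgf : ∀ θ : ℝ, 0 < θ → θ < 2 / C →
      Integrable (fun ω => Real.exp (θ * Y ω)) P) :
    ∀ θ : ℝ, 0 < θ → θ < 2 / C →
      ∫ ω, Real.exp (θ * Ys ω) ∂P ≤
        ((1 + C * θ / 2) / (1 - C * θ / 2)) * ∫ ω, Real.exp (θ * Y ω) ∂P := by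
  intro θ hθ hθC
  have hC : 0 < C := (div_pos_iff_of_pos_left two_pos).1 (hθ.trans hθC)
  have hCθ : C * θ < 2 := by rwa [lt_div_iff₀ hC, mul_comm] at hθC
  calc ∫ ω, Real.exp (θ * Ys ω) ∂P
      ≤ Real.exp (θ * C) * ∫ ω, Real.exp (θ * Y ω) ∂P :=
        integral_exp_mul_le_of_sub_le hθ.le hYsmeas.aestronglyMeasurable (hmgf θ hθ hθC)
          (hbdd.mono fun ω hω => (le_abs_self _).trans hω)
    _ ≤ ((1 + C * θ / 2) / (1 - C * θ / 2)) * ∫ ω, Real.exp (θ * Y ω) ∂P := by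
        gcongr ?_ * _
        rw [mul_comm θ C]
        exact Real.exp_le_one_add_div_one_sub (by positivity) hCθ

/-- Bound on the moment generating function of the size-biased variable
for `0 < θ < 2/C` under a bounded size-bias coupling. -/
theorem sizeBias_mgf_upper {Ω : Type*} [MeasurableSpace Ω] (P : Measure Ω)
    [IsProbabilityMeasure P] (Y Ys : Ω → ℝ) (μ C : ℝ)
    (hμ : 0 < μ) (hC : 0 < C)
    (hYmeas : Measurable Y) (hYsmeas : Measurable Ys)
    (hYnonneg : ∀ ω, 0 ≤ Y ω)
    (hmean : ∫ ω, Y ω ∂P = μ)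
    (hsb : ∀ f : ℝ → ℝ, Integrable (fun ω => Y ω * f (Y ω)) P →
      Integrable (fun ω => f (Ys ω)) P →
      ∫ ω, Y ω * f (Y ω) ∂P = μ * ∫ ω, f (Ys ω) ∂P)
    (hbdd : ∀ᵐ ω ∂P, |Ys ω - Y ω| ≤ C)
    (hmgf : ∀ θ : ℝ, 0 < θ → θ < 2 / C →
      Integrable (fun ω => Real.exp (θ * Y ω)) P) :
    ∀ θ : ℝ, 0 < θ → θ < 2 / C →
      ∫ ω, Real.exp (θ * Ys ω) ∂P ≤
        ((1 + C * θ / 2) / (1 - C * θ / 2)) * ∫ ω, Real.exp (θ * Y ω) ∂P :=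
  sizeBias_mgf_upper_general P Y Ys C hYsmeas hbdd hmgf
end

section
/- Let {C_g : g ∈ 𝒱} be independent random variables, and for each α ∈ 𝒱 let 𝒱_α ⊆ 𝒱 and let X_α = X_α(C_g, g ∈ 𝒱_α) be nonnegative with finite nonzero mean. Let {C_g^α : g ∈ 𝒱_α} be independent of {C_g} with distribution dF^α(c) = X_α(c) dF(c)/E X_α, and set X_β^α = X_β(C_g^α for g ∈ 𝒱_β ∩ 𝒱_α, C_g for g ∈ 𝒱_β \ 𝒱_α). Then X^α = {X_β^α : β ∈ 𝒱} has the X distribution size-biased in coordinate α. Moreover, if X_α ≤ M for all α, then with I chosen proportional to E X_α independently of everything else, Y^s = Σ_β X_β^I has the Y = Σ_β X_β size-biased distribution and |Y^s - Y| ≤ bM, where b = max_α |{β : 𝒱_β ∩ 𝒱_α ≠ ∅}|. -/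
open MeasureTheory ProbabilityTheory

/-!
The law of `(C_g)` is a product measure, so replacing the coordinates in `𝒱_α` by those of an
independent copy does not change it. Tilting the copy by `X_α / E X_α` therefore tilts the mixed
vector by the same density, since `X_α` only reads the coordinates in `𝒱_α`: this is size biasing
in coordinate `α`. Conditioning on the independent index `I` then gives
`E[Y g(Y)] = Σ_α E[X_α g(Y)] = Σ_α E X_α · E g(Y^α) = μ · E g(Y^s)`. Finally `X_β^α = X_β` unless
`𝒱_β` meets `𝒱_α`, and each of the at most `b` remaining terms moves by at most `M`.
-/

section Piecewise

variable {ι : Type*} [DecidableEq ι] {X : ι → Type*} [∀ i, MeasurableSpace (X i)]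

theorem Measurable.finset_piecewise {δ : Type*} [MeasurableSpace δ] (s : Finset ι)
    {f g : δ → ∀ i, X i} (hf : Measurable f) (hg : Measurable g) :
    Measurable fun x => s.piecewise (f x) (g x) := by
  refine measurable_pi_lambda _ fun i => ?_
  by_cases hi : i ∈ s
  · simp only [Finset.piecewise_eq_of_mem _ _ _ hi]
    exact (measurable_pi_apply i).comp hf
  · simp only [Finset.piecewise_eq_of_notMem _ _ _ hi]
    exact (measurable_pi_apply i).comp hg

theorem measurePreserving_finset_piecewise [Fintype ι] (μ : ∀ i, Measure (X i))
    [∀ i, IsProbabilityMeasure (μ i)] (s : Finset ι) :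
    MeasurePreserving (fun p : (∀ i, X i) × (∀ i, X i) => s.piecewise p.1 p.2)
      ((Measure.pi μ).prod (Measure.pi μ)) (Measure.pi μ) where
  measurable := .finset_piecewise s measurable_fst measurable_snd
  map_eq := by
    refine (Measure.pi_eq fun t ht => ?_).symm
    have hpre : (fun p : (∀ i, X i) × (∀ i, X i) => s.piecewise p.1 p.2) ⁻¹' Set.univ.pi t =
        Set.univ.pi (s.piecewise t fun _ => Set.univ) ×ˢ
          Set.univ.pi (s.piecewise (fun _ => Set.univ) t) := by
      ext p
      simp only [Set.mem_preimage, Set.mem_prod, Set.mem_univ_pi, ← forall_and]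
      refine forall_congr' fun i => ?_
      by_cases hi : i ∈ s <;> simp [hi]
    rw [Measure.map_apply (.finset_piecewise s measurable_fst measurable_snd) (.univ_pi ht), hpre,
      Measure.prod_prod, Measure.pi_pi, Measure.pi_pi, ← Finset.prod_mul_distrib]
    refine Finset.prod_congr rfl fun i _ => ?_
    by_cases hi : i ∈ s <;> simp [hi]

theorem integral_mul_eq_mul_integral_piecewise [Fintype ι] (μ : ∀ i, Measure (X i))
    [∀ i, IsProbabilityMeasure (μ i)] (s : Finset ι) {h : (∀ i, X i) → ℝ} (hh : Measurable h)
    (h_nonneg : ∀ c, 0 ≤ h c) (h_local : ∀ c c', (∀ i ∈ s, c i = c' i) → h c = h c')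
    {m : ℝ} (hm : 0 < m) {F : (∀ i, X i) → ℝ} (hF : AEStronglyMeasurable F (Measure.pi μ)) :
    ∫ c, h c * F c ∂Measure.pi μ = m * ∫ p, F (s.piecewise p.1 p.2)
      ∂(((Measure.pi μ).withDensity fun c => ENNReal.ofReal (h c / m)).prod (Measure.pi μ)) := by
  have hpw := measurePreserving_finset_piecewise μ s
  rw [prod_withDensity_left (by fun_prop), integral_withDensity_eq_integral_toReal_smul
    (by fun_prop) (.of_forall fun _ => ENNReal.ofReal_lt_top)]
  calc ∫ c, h c * F c ∂Measure.pi μ = m * ∫ c, h c / m * F c ∂Measure.pi μ := by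
        rw [← integral_const_mul]
        congr with c
        field_simp
    _ = m * ∫ p, h (s.piecewise p.1 p.2) / m * F (s.piecewise p.1 p.2)
          ∂(Measure.pi μ).prod (Measure.pi μ) := by
        have hG : AEStronglyMeasurable (fun c => h c / m * F c) (Measure.pi μ) :=
          (hh.div_const m).aestronglyMeasurable.mul hF
        rw [← hpw.map_eq] at hG
        rw [← integral_map hpw.measurable.aemeasurable hG, hpw.map_eq]
    _ = _ := by
        congr 1
        refine integral_congr_ae (.of_forall fun p => ?_)
        simp only [smul_eq_mul, ENNReal.toReal_ofReal (div_nonneg (h_nonneg _) hm.le)]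
        rw [h_local p.1 _ fun i hi => (Finset.piecewise_eq_of_mem _ _ _ hi).symm]

theorem integral_mul_eq_mul_integral_piecewise_of_indepFun [Fintype ι] {Ω : Type*}
    [MeasurableSpace Ω] {P : Measure Ω} [IsProbabilityMeasure P] {C C' : ∀ i, Ω → X i}
    (hC : ∀ i, Measurable (C i)) (hC' : ∀ i, Measurable (C' i)) (hC_indep : iIndepFun C P)
    (hCC' : IndepFun (fun ω i => C' i ω) (fun ω i => C i ω) P) (s : Finset ι)
    {h : (∀ i, X i) → ℝ} (hh : Measurable h) (h_nonneg : ∀ c, 0 ≤ h c)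
    (h_local : ∀ c c', (∀ i ∈ s, c i = c' i) → h c = h c') {m : ℝ} (hm : 0 < m)
    (hC'_law : P.map (fun ω i => C' i ω) =
      (P.map fun ω i => C i ω).withDensity fun c => ENNReal.ofReal (h c / m))
    {F : (∀ i, X i) → ℝ} (hF : Measurable F) :
    ∫ ω, h (fun i => C i ω) * F (fun i => C i ω) ∂P =
      m * ∫ ω, F (s.piecewise (fun i => C' i ω) (fun i => C i ω)) ∂P := by
  have hCvec : Measurable fun ω i => C i ω := measurable_pi_lambda _ hC
  have hC'vec : Measurable fun ω i => C' i ω := measurable_pi_lambda _ hC'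
  have hlaw := hC_indep.map_fun_eq_pi_map fun i => (hC i).aemeasurable
  have hjoint := (indepFun_iff_map_prod_eq_prod_map_map hC'vec.aemeasurable
    hCvec.aemeasurable).mp hCC'
  rw [hC'_law, hlaw] at hjoint
  have : ∀ i, IsProbabilityMeasure (P.map (C i)) := fun i =>
    Measure.isProbabilityMeasure_map (hC i).aemeasurable
  rw [← integral_map hCvec.aemeasurable (f := fun c => h c * F c)
      (hh.mul hF).aestronglyMeasurable, hlaw,
    integral_mul_eq_mul_integral_piecewise _ s hh h_nonneg h_local hm hF.aestronglyMeasurable,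
    ← hjoint, integral_map (hC'vec.prodMk hCvec).aemeasurable
      (f := fun p => F (s.piecewise p.1 p.2))
      (hF.comp (.finset_piecewise s measurable_fst measurable_snd)).aestronglyMeasurable]

end Piecewise

theorem integral_comp_eq_sum_of_indepFun {Ω ι Z : Type*} [MeasurableSpace Ω] {P : Measure Ω}
    [IsFiniteMeasure P] [Fintype ι] [MeasurableSpace ι] [MeasurableSingletonClass ι]
    [MeasurableSpace Z] {I : Ω → ι} {W : Ω → Z} (hI : Measurable I) (hW : Measurable W)
    (hIW : IndepFun I W P) {ψ : ι → Z → ℝ} (hψ : ∀ i, Measurable (ψ i))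
    (hint : Integrable (fun ω => ψ (I ω) (W ω)) P) :
    ∫ ω, ψ (I ω) (W ω) ∂P = ∑ i, P.real {ω | I ω = i} * ∫ ω, ψ i (W ω) ∂P := by
  have hψ' : Measurable fun q : ι × Z => ψ q.1 q.2 :=
    measurable_from_prod_countable_right hψ
  have hjoint := (indepFun_iff_map_prod_eq_prod_map_map hI.aemeasurable hW.aemeasurable).mp hIW
  have hint' : Integrable (fun q : ι × Z => ψ q.1 q.2) ((P.map I).prod (P.map W)) := by
    rwa [← hjoint, integrable_map_measure hψ'.aestronglyMeasurable (hI.prodMk hW).aemeasurable]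
  rw [← integral_map (hI.prodMk hW).aemeasurable (f := fun q : ι × Z => ψ q.1 q.2)
    hψ'.aestronglyMeasurable, hjoint, integral_prod _ hint',
    integral_fintype hint'.integral_prod_left]
  refine Finset.sum_congr rfl fun i _ => ?_
  rw [map_measureReal_apply hI (measurableSet_singleton i), smul_eq_mul,
    integral_map hW.aemeasurable (hψ i).aestronglyMeasurable]
  rfl

theorem integral_sum_mul_eq_sum_integral_mul {Ω ι : Type*} [MeasurableSpace Ω] {P : Measure Ω}
    [Fintype ι] {X : ι → Ω → ℝ} {G : Ω → ℝ} (hX : ∀ i, AEStronglyMeasurable (X i) P)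
    (hG : AEStronglyMeasurable G P) (hX_nonneg : ∀ i ω, 0 ≤ X i ω)
    (hint : Integrable (fun ω => (∑ i, X i ω) * G ω) P) :
    ∫ ω, (∑ i, X i ω) * G ω ∂P = ∑ i, ∫ ω, X i ω * G ω ∂P := by
  have hint_i : ∀ i, Integrable (fun ω => X i ω * G ω) P := fun i =>
    hint.mono ((hX i).mul hG) (.of_forall fun ω => by
      rw [norm_mul, norm_mul]
      gcongr
      rw [Real.norm_of_nonneg (hX_nonneg i ω),
        Real.norm_of_nonneg (Finset.sum_nonneg fun j _ => hX_nonneg j ω)]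
      exact Finset.single_le_sum (fun j _ => hX_nonneg j ω) (Finset.mem_univ i))
  simp_rw [Finset.sum_mul]
  exact integral_finsetSum _ fun i _ => hint_i i

theorem abs_sum_sub_sum_le_card_mul {ι : Type*} [Fintype ι] (T : Finset ι) {a b : ι → ℝ} {M : ℝ}
    (ha : ∀ i, 0 ≤ a i ∧ a i ≤ M) (hb : ∀ i, 0 ≤ b i ∧ b i ≤ M) (hab : ∀ i ∉ T, a i = b i) :
    |∑ i, a i - ∑ i, b i| ≤ T.card * M := by
  rw [← Finset.sum_sub_distrib, ← Finset.sum_subset (Finset.subset_univ T)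
    fun i _ hi => sub_eq_zero.mpr (hab i hi)]
  calc |∑ i ∈ T, (a i - b i)| ≤ ∑ i ∈ T, |a i - b i| := Finset.abs_sum_le_sum_abs _ _
    _ ≤ ∑ _i ∈ T, M := Finset.sum_le_sum fun i _ =>
        abs_sub_le_of_nonneg_of_le (ha i).1 (ha i).2 (hb i).1 (hb i).2
    _ = T.card * M := by rw [Finset.sum_const, nsmul_eq_mul]

theorem abs_sum_piecewise_sub_sum_le {ι κ E : Type*} [Fintype ι] [DecidableEq κ]
    (N : ι → Finset κ) {f : ι → (κ → E) → ℝ}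
    (hf_local : ∀ i c c', (∀ k ∈ N i, c k = c' k) → f i c = f i c') {M : ℝ}
    (hf_nonneg : ∀ i c, 0 ≤ f i c) (hf_le : ∀ i c, f i c ≤ M) (s : Finset κ) (c' c : κ → E) :
    |∑ i, f i (s.piecewise c' c) - ∑ i, f i c| ≤
      (Finset.univ.filter fun i => (N i ∩ s).Nonempty).card * M := by
  refine abs_sum_sub_sum_le_card_mul _ (fun i => ⟨hf_nonneg _ _, hf_le _ _⟩)
    (fun i => ⟨hf_nonneg _ _, hf_le _ _⟩) fun i hi => hf_local i _ _ fun k hk => ?_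
  refine Finset.piecewise_eq_of_notMem _ _ _ fun hks => hi ?_
  exact Finset.mem_filter.mpr ⟨Finset.mem_univ i, k, Finset.mem_inter.mpr ⟨hk, hks⟩⟩

theorem integral_sum_mul_eq_mul_integral_mixture {Ω ι Z : Type*} [MeasurableSpace Ω]
    {P : Measure Ω} [IsFiniteMeasure P] [Fintype ι] [MeasurableSpace ι]
    [MeasurableSingletonClass ι] [MeasurableSpace Z] {X : ι → Ω → ℝ}
    (hX : ∀ i, Measurable (X i)) (hX_nonneg : ∀ i ω, 0 ≤ X i ω) {m : ι → ℝ}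
    (hm : ∀ i, 0 < m i) {I : Ω → ι} {W : Ω → Z} (hI : Measurable I) (hW : Measurable W)
    (hIW : IndepFun I W P) (hI_law : ∀ i, P.real {ω | I ω = i} = m i / ∑ j, m j)
    {φ : ι → Z → ℝ} (hφ : ∀ i, Measurable (φ i)) {g : ℝ → ℝ} (hg : Measurable g)
    (h_bias : ∀ i, ∫ ω, X i ω * g (∑ j, X j ω) ∂P = m i * ∫ ω, g (φ i (W ω)) ∂P)
    (hint : Integrable (fun ω => (∑ i, X i ω) * g (∑ i, X i ω)) P)
    (hint_mix : Integrable (fun ω => g (φ (I ω) (W ω))) P) :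
    ∫ ω, (∑ i, X i ω) * g (∑ i, X i ω) ∂P = (∑ i, m i) * ∫ ω, g (φ (I ω) (W ω)) ∂P := by
  rw [integral_sum_mul_eq_sum_integral_mul (G := fun ω => g (∑ i, X i ω))
    (fun i => (hX i).aestronglyMeasurable)
    (hg.comp (Finset.measurable_sum _ fun i _ => hX i)).aestronglyMeasurable hX_nonneg hint,
    integral_comp_eq_sum_of_indepFun (ψ := fun i z => g (φ i z)) hI hW hIW
      (fun i => hg.comp (hφ i)) hint_mix, Finset.mul_sum]
  refine Finset.sum_congr rfl fun i _ => ?_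
  have : ∑ j, m j ≠ 0 := (Finset.sum_pos (fun j _ => hm j) ⟨i, Finset.mem_univ i⟩).ne'
  rw [h_bias, hI_law]
  field_simp

theorem sizeBias_local_dependence_general {Ω : Type*} [MeasurableSpace Ω] (P : Measure Ω)
    [IsProbabilityMeasure P] {V : Type*} [Fintype V] [DecidableEq V]
    [MeasurableSpace V] [MeasurableSingletonClass V]
    (C : V → Ω → ℝ) (hCmeas : ∀ g, Measurable (C g))
    (hCindep : iIndepFun C P)
    (Vnbd : V → Finset V)
    (Xfun : V → (V → ℝ) → ℝ) (hXfmeas : ∀ α, Measurable (Xfun α))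
    (hXloc : ∀ α (c c' : V → ℝ), (∀ g ∈ Vnbd α, c g = c' g) → Xfun α c = Xfun α c')
    (hXnonneg : ∀ α c, 0 ≤ Xfun α c)
    (EX : V → ℝ) (hEXpos : ∀ α, 0 < EX α)
    (Cs : V → V → Ω → ℝ) (hCsmeas : ∀ α g, Measurable (Cs α g))
    (hCslaw : ∀ α, Measure.map (fun ω => (fun g => Cs α g ω)) P =
      (Measure.map (fun ω => (fun g => C g ω)) P).withDensity
        (fun c => ENNReal.ofReal (Xfun α c / EX α)))
    (hCsindep : ∀ α, IndepFun (fun ω => (fun g => Cs α g ω))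
      (fun ω => (fun g => C g ω)) P)
    -- the coordinatewise size biased vectors
    (Xb : V → V → Ω → ℝ)
    (hXb : ∀ α β ω, Xb α β ω =
      Xfun β (fun g => if g ∈ Vnbd α then Cs α g ω else C g ω))
    -- the random index chosen proportional to the means
    (I : Ω → V) (hImeas : Measurable I) (μ : ℝ) (hμ : μ = ∑ α, EX α)
    (hIlaw : ∀ α, (P {ω | I ω = α}).toReal = EX α / μ)
    (hIindep : IndepFun I
      (fun ω => ((fun g => C g ω), (fun p : V × V => Cs p.1 p.2 ω))) P)
    (M : ℝ) (hM : ∀ α c, Xfun α c ≤ M)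
    (Y Ys : Ω → ℝ)
    (hY : ∀ ω, Y ω = ∑ β, Xfun β (fun g => C g ω))
    (hYs : ∀ ω, Ys ω = ∑ β, Xb (I ω) β ω)
    (b : ℕ)
    (hb : b = Finset.univ.sup
      (fun α => (Finset.univ.filter (fun β => (Vnbd β ∩ Vnbd α).Nonempty)).card)) :
    -- X^α has the X distribution size-biased in coordinate α
    (∀ α, ∀ f : (V → ℝ) → ℝ, Measurable f →
      Integrable (fun ω => Xfun α (fun g => C g ω) * f (fun β => Xfun β (fun g => C g ω))) P →
      Integrable (fun ω => f (fun β => Xb α β ω)) P →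
      ∫ ω, Xfun α (fun g => C g ω) * f (fun β => Xfun β (fun g => C g ω)) ∂P =
        EX α * ∫ ω, f (fun β => Xb α β ω) ∂P) ∧
    -- Y^s has the Y size-biased distribution
    (∀ g : ℝ → ℝ, Measurable g →
      Integrable (fun ω => Y ω * g (Y ω)) P →
      Integrable (fun ω => g (Ys ω)) P →
      ∫ ω, Y ω * g (Y ω) ∂P = μ * ∫ ω, g (Ys ω) ∂P) ∧
    -- the coupling is bounded by bM
    (∀ ω, |Ys ω - Y ω| ≤ b * M) := by
  subst hμ
  have hCvec : Measurable fun ω g => C g ω := measurable_pi_lambda _ hCmeas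
  have hbias : ∀ α f, Measurable f →
      ∫ ω, Xfun α (fun g => C g ω) * f (fun β => Xfun β (fun g => C g ω)) ∂P =
        EX α * ∫ ω, f (fun β => Xb α β ω) ∂P := fun α f hf => by
    simp only [hXb]
    exact integral_mul_eq_mul_integral_piecewise_of_indepFun hCmeas (hCsmeas α) hCindep
      (hCsindep α) (Vnbd α) (hXfmeas α) (hXnonneg α) (hXloc α) (hEXpos α) (hCslaw α)
      (hf.comp (measurable_pi_lambda _ fun β => hXfmeas β))
  refine ⟨fun α f hf _ _ => hbias α f hf, fun g hg hint hint_mix => ?_, fun ω => ?_⟩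
  · let W : Ω → (V → ℝ) × (V × V → ℝ) := fun ω => ((fun g => C g ω), fun p => Cs p.1 p.2 ω)
    let φ : V → (V → ℝ) × (V × V → ℝ) → ℝ := fun α q =>
      ∑ β, Xfun β ((Vnbd α).piecewise (fun g => q.2 (α, g)) q.1)
    have hφW : ∀ α ω, φ α (W ω) = ∑ β, Xb α β ω := fun α ω => by simp only [hXb]; rfl
    simp only [hY] at hint ⊢
    simp only [hYs, ← hφW] at hint_mix ⊢
    refine integral_sum_mul_eq_mul_integral_mixture (X := fun α ω => Xfun α fun g => C g ω)
      (W := W) (φ := φ) (fun α => (hXfmeas α).comp hCvec)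
      (fun α ω => hXnonneg α _) hEXpos hImeas
      (hCvec.prodMk (measurable_pi_lambda _ fun p => hCsmeas p.1 p.2)) hIindep
      (fun α => by rw [measureReal_def, hIlaw]) (fun α => Finset.measurable_sum _ fun β _ =>
        (hXfmeas β).comp (.finset_piecewise _ (by fun_prop) measurable_fst)) hg
      (fun α => by simp only [hφW]; exact hbias α (fun x => g (∑ β, x β)) (by fun_prop))
      hint hint_mix
  · have hM0 : 0 ≤ M := (hXnonneg (I ω) 0).trans (hM _ 0)
    have hcard : (Finset.univ.filter fun β => (Vnbd β ∩ Vnbd (I ω)).Nonempty).card ≤ b := by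
      rw [hb]
      exact Finset.le_sup (f := fun α => (Finset.univ.filter
        fun β => (Vnbd β ∩ Vnbd α).Nonempty).card) (Finset.mem_univ (I ω))
    simp only [hYs, hY, hXb]
    exact (abs_sum_piecewise_sub_sum_le Vnbd hXloc hXnonneg hM (Vnbd (I ω)) _ _).trans
      (by gcongr)

/-- Size biasing a sum of functions of independent random variables: biasing the
underlying variables in the neighborhood `𝒱_α` produces the distribution size-biased
in coordinate `α`; mixing over a proportionally chosen index `I` produces a size-biased
version `Y^s` of `Y` with `|Y^s - Y| ≤ bM`. -/
theorem sizeBias_local_dependence {Ω : Type*} [MeasurableSpace Ω] (P : Measure Ω)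
    [IsProbabilityMeasure P] {V : Type*} [Fintype V] [DecidableEq V]
    [MeasurableSpace V] [MeasurableSingletonClass V]
    (C : V → Ω → ℝ) (hCmeas : ∀ g, Measurable (C g))
    (hCindep : iIndepFun C P)
    (Vnbd : V → Finset V)
    (Xfun : V → (V → ℝ) → ℝ) (hXfmeas : ∀ α, Measurable (Xfun α))
    (hXloc : ∀ α (c c' : V → ℝ), (∀ g ∈ Vnbd α, c g = c' g) → Xfun α c = Xfun α c')
    (hXnonneg : ∀ α c, 0 ≤ Xfun α c)
    (EX : V → ℝ) (hEXpos : ∀ α, 0 < EX α)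
    (hEX : ∀ α, ∫ ω, Xfun α (fun g => C g ω) ∂P = EX α)
    (Cs : V → V → Ω → ℝ) (hCsmeas : ∀ α g, Measurable (Cs α g))
    (hCslaw : ∀ α, Measure.map (fun ω => (fun g => Cs α g ω)) P =
      (Measure.map (fun ω => (fun g => C g ω)) P).withDensity
        (fun c => ENNReal.ofReal (Xfun α c / EX α)))
    (hCsindep : ∀ α, IndepFun (fun ω => (fun g => Cs α g ω))
      (fun ω => (fun g => C g ω)) P)
    -- the coordinatewise size biased vectors
    (Xb : V → V → Ω → ℝ)
    (hXb : ∀ α β ω, Xb α β ω =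
      Xfun β (fun g => if g ∈ Vnbd α then Cs α g ω else C g ω))
    -- the random index chosen proportional to the means
    (I : Ω → V) (hImeas : Measurable I) (μ : ℝ) (hμ : μ = ∑ α, EX α)
    (hIlaw : ∀ α, (P {ω | I ω = α}).toReal = EX α / μ)
    (hIindep : IndepFun I
      (fun ω => ((fun g => C g ω), (fun p : V × V => Cs p.1 p.2 ω))) P)
    (M : ℝ) (hM : ∀ α c, Xfun α c ≤ M)
    (Y Ys : Ω → ℝ)
    (hY : ∀ ω, Y ω = ∑ β, Xfun β (fun g => C g ω))
    (hYs : ∀ ω, Ys ω = ∑ β, Xb (I ω) β ω)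
    (b : ℕ)
    (hb : b = Finset.univ.sup
      (fun α => (Finset.univ.filter (fun β => (Vnbd β ∩ Vnbd α).Nonempty)).card)) :
    -- X^α has the X distribution size-biased in coordinate α
    (∀ α, ∀ f : (V → ℝ) → ℝ, Measurable f →
      Integrable (fun ω => Xfun α (fun g => C g ω) * f (fun β => Xfun β (fun g => C g ω))) P →
      Integrable (fun ω => f (fun β => Xb α β ω)) P →
      ∫ ω, Xfun α (fun g => C g ω) * f (fun β => Xfun β (fun g => C g ω)) ∂P =
        EX α * ∫ ω, f (fun β => Xb α β ω) ∂P) ∧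
    -- Y^s has the Y size-biased distribution
    (∀ g : ℝ → ℝ, Measurable g →
      Integrable (fun ω => Y ω * g (Y ω)) P →
      Integrable (fun ω => g (Ys ω)) P →
      ∫ ω, Y ω * g (Y ω) ∂P = μ * ∫ ω, g (Ys ω) ∂P) ∧
    -- the coupling is bounded by bM
    (∀ ω, |Ys ω - Y ω| ≤ b * M) :=
  sizeBias_local_dependence_general P C hCmeas hCindep Vnbd Xfun hXfmeas hXloc hXnonneg EX hEXpos Cs
    hCsmeas hCslaw hCsindep Xb hXb I hImeas μ hμ hIlaw hIindep M hM Y Ys hY hYs b hb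
end

section
/- Let ξ_1,…,ξ_n be i.i.d. Bernoulli(p) with p ∈ (0,1) and n ≥ 2m, extended periodically by ξ_{n+k} = ξ_k. Let Y = Σ_{i=1}^n ξ_i ξ_{i+1} ⋯ ξ_{i+m-1} count the number of m-runs. Then E[Y] = n p^m and Var(Y) = n p^m (1 + 2(p - p^m)/(1-p) - (2m-1) p^m). -/
/-!
Write `Y = ∑ᵢ ∏_{x ∈ Wᵢ} ξₓ`, where `Wᵢ = {i, …, i + m - 1}` is the cyclic window of the run at
`i`. Under the product measure a product of coordinates over a set `S` has mean `p ^ #S`, so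
`E Y = n p ^ m` and `E Y² = ∑_{i,k} p ^ #(Wᵢ ∪ Wₖ)`. By translation invariance this is
`n ∑_{v < n} p ^ #(W₀ ∪ Wᵥ)`, and since `2 m ≤ n` two windows overlap on one side only:
`#(W₀ ∪ Wᵥ) = m + min m (min v (n - v))`. Splitting the range of `v` into the two overlap
zones and the middle leaves two geometric sums.
-/

open MeasureTheory Finset

/-- The number of `m`-runs of ones in a cyclic sequence of `n` `Bool`s. -/
def runCount (n m : ℕ) [NeZero n] (ω : ZMod n → Bool) : ℝ :=
  ∑ i : ZMod n, ∏ j ∈ range m, (if ω (i + (j : ZMod n)) then (1 : ℝ) else 0)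

open ProbabilityTheory
open scoped NNReal

set_option linter.deprecated false

lemma integral_ite_bernoulli (q : ℝ≥0) (hq : q ≤ 1) :
    ∫ b, (if b then (1 : ℝ) else 0) ∂(PMF.bernoulli q hq).toMeasure = q := by
  simp [PMF.integral_eq_sum, PMF.bernoulli_apply]

lemma integral_prod_ite_pi_bernoulli {ι : Type*} [Fintype ι] [DecidableEq ι] (q : ℝ≥0)
    (hq : q ≤ 1) (S : Finset ι) :
    ∫ ω, ∏ x ∈ S, (if ω x then (1 : ℝ) else 0)
        ∂(Measure.pi fun _ : ι => (PMF.bernoulli q hq).toMeasure) = (q : ℝ) ^ #S := by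
  have hfubini := integral_fintype_prod_eq_prod (𝕜 := ℝ)
    (fun i (b : Bool) => if i ∈ S then (if b then (1 : ℝ) else 0) else 1)
    (μ := fun _ : ι => (PMF.bernoulli q hq).toMeasure)
  have hfactor (i : ι) : ∫ b, (if i ∈ S then (if b then (1 : ℝ) else 0) else 1)
      ∂(PMF.bernoulli q hq).toMeasure = if i ∈ S then (q : ℝ) else 1 := by
    split_ifs
    · exact integral_ite_bernoulli q hq
    · simp only [integral_const, probReal_univ, smul_eq_mul, mul_one]
  simpa only [hfactor, prod_ite_mem, univ_inter, prod_const] using hfubini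

lemma prod_ite_mul_prod_ite {α : Type*} [DecidableEq α] (ω : α → Bool) (S T : Finset α) :
    (∏ x ∈ S, (if ω x then (1 : ℝ) else 0)) * ∏ x ∈ T, (if ω x then (1 : ℝ) else 0) =
      ∏ x ∈ S ∪ T, (if ω x then (1 : ℝ) else 0) := by
  simp only [prod_boole, forall_mem_union]
  split_ifs <;> first | tauto | norm_num

def window {n : ℕ} (i : ZMod n) (l : ℕ) : Finset (ZMod n) :=
  (range l).image fun j : ℕ => i + (j : ZMod n)

section Window

variable {n : ℕ}

lemma mem_window {i x : ZMod n} {l : ℕ} : x ∈ window i l ↔ ∃ j < l, i + j = x := by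
  simp [window]

lemma window_injOn (i : ZMod n) {l : ℕ} (hl : l ≤ n) :
    Set.InjOn (fun j : ℕ => i + (j : ZMod n)) (range l) := by
  intro a ha b hb hab
  have hval := congrArg ZMod.val (add_left_cancel hab)
  simp only [coe_range, Set.mem_Iio] at ha hb
  rwa [ZMod.val_cast_of_lt (by omega), ZMod.val_cast_of_lt (by omega)] at hval

lemma card_window (i : ZMod n) {l : ℕ} (hl : l ≤ n) : #(window i l) = l := by
  rw [window, card_image_of_injOn (window_injOn i hl), card_range]

lemma image_add_window (i t : ZMod n) (l : ℕ) :
    (window t l).image (i + ·) = window (i + t) l := by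
  simp only [window, image_image, Function.comp_def, add_assoc]

lemma card_window_union_window (i k : ZMod n) (l : ℕ) :
    #(window i l ∪ window k l) = #(window 0 l ∪ window (k - i) l) := by
  calc #(window i l ∪ window k l)
      = #((window 0 l ∪ window (k - i) l).image (i + ·)) := by
        rw [image_union, image_add_window, image_add_window, add_zero, add_sub_cancel]
    _ = _ := card_image_of_injective _ (add_right_injective i)

lemma window_union_window_add (i : ZMod n) {l a : ℕ} (ha : a ≤ l) :
    window i l ∪ window (i + a) l = window i (l + a) := by
  ext x
  simp only [mem_union, mem_window]
  constructor
  · rintro (⟨j, hj, rfl⟩ | ⟨j, hj, rfl⟩)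
    · exact ⟨j, by omega, rfl⟩
    · exact ⟨a + j, by omega, by push_cast; ring⟩
  · rintro ⟨j, hj, rfl⟩
    by_cases hjl : j < l
    · exact Or.inl ⟨j, hjl, rfl⟩
    · exact Or.inr ⟨j - a, by omega, by rw [Nat.cast_sub (by omega)]; ring⟩

lemma disjoint_window {l v : ℕ} (hv : l ≤ v) (hvn : v + l ≤ n) :
    Disjoint (window 0 l) (window (v : ZMod n) l) := by
  rw [disjoint_left]
  rintro x hx hx'
  obtain ⟨j, hj, rfl⟩ := mem_window.mp hx
  obtain ⟨j', hj', hjj'⟩ := mem_window.mp hx'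
  rw [zero_add, ← Nat.cast_add, ZMod.natCast_eq_natCast_iff', Nat.mod_eq_of_lt (by omega),
    Nat.mod_eq_of_lt (by omega)] at hjj'
  omega

lemma card_window_zero_union_window {l v : ℕ} (hn : 2 * l ≤ n) (hv : v < n) :
    #(window 0 l ∪ window (v : ZMod n) l) = l + min l (min v (n - v)) := by
  rcases le_or_gt v l with hvl | hlv
  · rw [← zero_add (v : ZMod n), window_union_window_add 0 hvl, card_window 0 (by omega)]
    omega
  rcases le_or_gt (n - l) v with hvn | hvn
  · have hzero : (v : ZMod n) + (n - v : ℕ) = 0 := by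
      rw [← Nat.cast_add, Nat.add_sub_cancel' hv.le, ZMod.natCast_self]
    rw [union_comm, ← hzero, window_union_window_add _ (by omega), card_window _ (by omega)]
    omega
  · rw [card_union_of_disjoint (disjoint_window hlv.le (by omega)), card_window 0 (by omega),
      card_window _ (by omega)]
    omega

end Window

lemma sum_zmod_eq_sum_range {n : ℕ} [NeZero n] {M : Type*} [AddCommMonoid M]
    (g : ZMod n → M) : ∑ t, g t = ∑ v ∈ range n, g v :=
  sum_nbij' ZMod.val Nat.cast (fun t _ => mem_range.mpr t.val_lt) (fun _ _ => mem_univ _)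
    (fun t _ => ZMod.natCast_zmod_val t) (fun _ hv => ZMod.val_cast_of_lt (mem_range.mp hv))
    (fun t _ => by rw [ZMod.natCast_zmod_val])

lemma sum_range_min_min_sub {M : Type*} [AddCommMonoid M] (f : ℕ → M) (l k : ℕ) :
    ∑ v ∈ range (l + k + l), f (min l (min v (l + k + l - v))) =
      ∑ w ∈ range l, f w + k • f l + ∑ w ∈ range l, f (w + 1) := by
  rw [sum_range_add, sum_range_add, ← sum_range_reflect (fun w => f (w + 1))]
  congr 1
  congr 1
  · exact sum_congr rfl fun v hv => by rw [mem_range] at hv; congr; omega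
  · rw [sum_congr rfl fun v hv => congrArg f (by rw [mem_range] at hv; omega :
      min l (min (l + v) (l + k + l - (l + v))) = l), sum_const, card_range]
  · exact sum_congr rfl fun v hv => by rw [mem_range] at hv; congr 1; omega

section Moments

variable {n m : ℕ} [NeZero n]

lemma runCount_eq_sum_window (hmn : m ≤ n) (ω : ZMod n → Bool) :
    runCount n m ω = ∑ i, ∏ x ∈ window i m, (if ω x then (1 : ℝ) else 0) :=
  sum_congr rfl fun i _ => by rw [window, prod_image (window_injOn i hmn)]

variable (q : ℝ≥0) (hq : q ≤ 1)

lemma integral_runCount (hmn : m ≤ n) :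
    ∫ ω, runCount n m ω ∂(Measure.pi fun _ : ZMod n => (PMF.bernoulli q hq).toMeasure) =
      n * (q : ℝ) ^ m := by
  simp_rw [runCount_eq_sum_window hmn]
  rw [integral_finset_sum _ fun _ _ => Integrable.of_finite]
  simp_rw [integral_prod_ite_pi_bernoulli, card_window _ hmn]
  rw [sum_const, card_univ, ZMod.card, nsmul_eq_mul]

lemma integral_runCount_sq (hn : 2 * m ≤ n) :
    ∫ ω, runCount n m ω ^ 2 ∂(Measure.pi fun _ : ZMod n => (PMF.bernoulli q hq).toMeasure) =
      n * ∑ v ∈ range n, (q : ℝ) ^ (m + min m (min v (n - v))) := by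
  simp_rw [runCount_eq_sum_window (by omega : m ≤ n), sq, sum_mul_sum, prod_ite_mul_prod_ite]
  rw [integral_finset_sum _ fun _ _ => integrable_finset_sum _ fun _ _ => Integrable.of_finite]
  simp_rw [integral_finset_sum _ fun _ _ => Integrable.of_finite, integral_prod_ite_pi_bernoulli]
  have hshift (i : ZMod n) : ∑ k : ZMod n, (q : ℝ) ^ #(window i m ∪ window k m) =
      ∑ t : ZMod n, (q : ℝ) ^ #(window 0 m ∪ window t m) := by
    simp_rw [card_window_union_window i _ m]
    exact Fintype.sum_equiv (Equiv.subRight i) _ _ fun _ => rfl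
  rw [sum_congr rfl fun i _ => hshift i, sum_const, card_univ, ZMod.card, nsmul_eq_mul,
    sum_zmod_eq_sum_range]
  congr 1
  exact sum_congr rfl fun v hv => by rw [card_window_zero_union_window hn (mem_range.mp hv)]

end Moments

theorem m_runs_mean_variance_general (n m : ℕ) [NeZero n] (hn : 2 * m ≤ n)
    (p : ℝ) (hp0 : 0 < p) (hp1 : p < 1) :
    (∫ ω, runCount n m ω
        ∂(Measure.pi fun _ : ZMod n =>
          (PMF.bernoulli (Real.toNNReal p) (Real.toNNReal_le_one.mpr hp1.le)).toMeasure)) =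
      n * p ^ m ∧
    (∫ ω, (runCount n m ω - n * p ^ m) ^ 2
        ∂(Measure.pi fun _ : ZMod n =>
          (PMF.bernoulli (Real.toNNReal p) (Real.toNNReal_le_one.mpr hp1.le)).toMeasure)) =
      n * p ^ m * (1 + 2 * (p - p ^ m) / (1 - p) - (2 * (m : ℝ) - 1) * p ^ m) := by
  have hq : (Real.toNNReal p : ℝ) = p := Real.coe_toNNReal p hp0.le
  have hmean := integral_runCount _ (Real.toNNReal_le_one.mpr hp1.le) (by omega : m ≤ n)
  rw [hq] at hmean
  refine ⟨hmean, ?_⟩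
  rw [← hmean, ← variance_eq_integral Measurable.of_discrete.aemeasurable,
    variance_eq_sub MemLp.of_discrete, hmean, Pi.pow_def, integral_runCount_sq _ _ hn, hq]
  obtain ⟨k, rfl⟩ : ∃ k, n = m + k + m := ⟨n - 2 * m, by omega⟩
  rw [sum_range_min_min_sub (fun j => p ^ (m + j))]
  have hsub : 1 - p ≠ 0 := sub_ne_zero.mpr hp1.ne'
  have hgeom : ∑ w ∈ range m, p ^ w = (1 - p ^ m) / (1 - p) := by
    rw [geom_sum_eq hp1.ne, ← neg_div_neg_eq, neg_sub, neg_sub]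
  simp only [pow_add p m, pow_succ p, ← mul_sum, ← sum_mul, hgeom, nsmul_eq_mul]
  field_simp
  push_cast
  ring

/-- Mean and variance of the number of `m`-runs in `n` i.i.d. Bernoulli(`p`)
variables, counted cyclically. -/
theorem m_runs_mean_variance (n m : ℕ) [NeZero n] (hm : 1 ≤ m) (hn : 2 * m ≤ n)
    (p : ℝ) (hp0 : 0 < p) (hp1 : p < 1) :
    (∫ ω, runCount n m ω
        ∂(Measure.pi fun _ : ZMod n =>
          (PMF.bernoulli (Real.toNNReal p) (Real.toNNReal_le_one.mpr hp1.le)).toMeasure)) =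
      n * p ^ m ∧
    (∫ ω, (runCount n m ω - n * p ^ m) ^ 2
        ∂(Measure.pi fun _ : ZMod n =>
          (PMF.bernoulli (Real.toNNReal p) (Real.toNNReal_le_one.mpr hp1.le)).toMeasure)) =
      n * p ^ m * (1 + 2 * (p - p ^ m) / (1 - p) - (2 * (m : ℝ) - 1) * p ^ m) :=
  m_runs_mean_variance_general n m hn p hp0 hp1
end

section
/- Throw n balls independently and uniformly into m urns. Let Y be the number of non-isolated balls, i.e., Y = Σ_{i=1}^n 1(some other ball lands in the same urn as ball i). Then E[Y] = n(1 - (1 - 1/m)^{n-1}) and Var(Y) = n(1-1/m)^{n-1} + ((m-1)n(n-1)/m)(1 - 2/m)^{n-2} - n²(1 - 1/m)^{2n-2}. -/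
/-!
Write `Y = n - Z`, where `Z` counts the isolated balls. All balls of a set `s` are isolated
exactly when they occupy `#s` distinct urns and every other ball avoids those urns, which happens
for `m (m - 1) ⋯ (m - #s + 1) · (m - #s) ^ (n - #s)` of the `m ^ n` equally likely outcomes.
Hence `P(i isolated) = (1 - 1/m) ^ (n - 1)` and, for `i ≠ j`,
`P(i and j isolated) = (1 - 1/m) (1 - 2/m) ^ (n - 2)`. Expanding `Z` and `Z ^ 2` into indicators
gives `E[Z]` and `E[Z ^ 2]`, and `Var Y = Var Z = E[Z ^ 2] - E[Z] ^ 2`.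
-/

open scoped Classical
open MeasureTheory Finset

noncomputable def nonIsolated (n m : ℕ) (ω : Fin n → Fin m) : ℝ :=
  ∑ i : Fin n, if ∃ j : Fin n, j ≠ i ∧ ω j = ω i then 1 else 0

open Function Fintype ProbabilityTheory

variable {ι α : Type*}

def IsIsolated (ω : ι → α) (i : ι) : Prop := ∀ j, j ≠ i → ω j ≠ ω i

variable [Fintype ι]

noncomputable def numIsolated (ω : ι → α) : ℝ := ∑ i, if IsIsolated ω i then 1 else 0

theorem nonIsolated_eq_sub_numIsolated {n m : ℕ} (ω : Fin n → Fin m) :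
    nonIsolated n m ω = n - numIsolated ω := by
  have shared_iff : ∀ i, (∃ j, j ≠ i ∧ ω j = ω i) ↔ ¬IsIsolated ω i := fun i => by
    simp [IsIsolated]
  rw [eq_sub_iff_add_eq, nonIsolated, numIsolated, ← sum_add_distrib]
  simp [shared_iff, ite_add_ite]

theorem numIsolated_sq (ω : ι → α) :
    numIsolated ω ^ 2 = ∑ i, ∑ j, if IsIsolated ω i ∧ IsIsolated ω j then 1 else 0 := by
  simp only [numIsolated, sq, Fintype.sum_mul_sum, ite_zero_mul_ite_zero, mul_one]

variable [Fintype α]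

theorem card_injective_eq_descFactorial (β : Type*) [Fintype β] [DecidableEq β] :
    #{g : β → α | Injective g} = (card α).descFactorial (card β) := by
  rw [← Fintype.card_subtype, Fintype.card_congr (Equiv.subtypeInjectiveEquivEmbedding β α),
    card_embedding_eq]

/-- Fibering over the restriction `g` of `ω` to `s`: the fiber is nonempty only for injective
`g`, and then `ω` is pinned on `s` and free outside `s` among the urns missed by `g`. -/
theorem card_forall_mem_isIsolated (s : Finset ι) :
    #{ω : ι → α | ∀ i ∈ s, IsIsolated ω i} =
      (card α).descFactorial #s * (card α - #s) ^ (card ι - #s) := by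
  have restrict_injective : ∀ ω ∈ ({ω : ι → α | ∀ i ∈ s, IsIsolated ω i} : Finset _),
      (fun ω (i : s) => ω i) ω ∈ ({g : s → α | Injective g} : Finset _) := by
    intro ω hω
    simp only [mem_filter, mem_univ, true_and] at hω ⊢
    intro i j hij
    by_contra hne
    exact hω i i.2 j (fun h => hne (Subtype.ext h.symm)) hij.symm
  rw [card_eq_sum_card_fiberwise restrict_injective]
  have fiber : ∀ g ∈ ({g : s → α | Injective g} : Finset _),
      #{ω ∈ ({ω : ι → α | ∀ i ∈ s, IsIsolated ω i} : Finset _) | (fun i : s => ω i) = g} =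
        (card α - #s) ^ (card ι - #s) := by
    intro g hg
    simp only [mem_filter, mem_univ, true_and] at hg
    have fiber_eq :
        {ω ∈ ({ω : ι → α | ∀ i ∈ s, IsIsolated ω i} : Finset _) | (fun i : s => ω i) = g} =
          piFinset fun j => if h : j ∈ s then {g ⟨j, h⟩} else (univ.image g)ᶜ := by
      ext ω
      simp only [mem_filter, mem_univ, true_and, mem_piFinset, funext_iff, Subtype.forall]
      constructor
      · rintro ⟨hiso, hg⟩ j
        split_ifs with hj
        · simp [hg j hj]
        · simp only [mem_compl, mem_image, mem_univ, true_and, Subtype.exists, not_exists]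
          intro i hi hgi
          exact hiso i hi j (by rintro rfl; exact hj hi) (by rw [hg i hi, hgi])
      · intro h
        have pinned : ∀ i (hi : i ∈ s), ω i = g ⟨i, hi⟩ := fun i hi => by
          simpa [hi] using h i
        refine ⟨fun i hi j hji => ?_, pinned⟩
        by_cases hj : j ∈ s
        · rw [pinned i hi, pinned j hj]
          exact hg.ne (by simpa using hji)
        · have hj_free := h j
          simp only [hj, dite_false, mem_compl, mem_image, mem_univ, true_and,
            not_exists] at hj_free
          exact pinned i hi ▸ Ne.symm (hj_free ⟨i, hi⟩)
    have card_factor : ∀ j, #(if h : j ∈ s then {g ⟨j, h⟩} else (univ.image g)ᶜ) =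
        if j ∈ s then 1 else card α - #s := by
      intro j
      split_ifs <;> simp [card_compl, card_image_of_injective _ hg]
    rw [fiber_eq, card_piFinset, prod_congr rfl fun j _ => card_factor j, prod_ite,
      prod_const_one, one_mul, prod_const, filter_not, card_sdiff]
    simp only [card_univ, subset_univ, filter_mem_eq_of_subset, inter_univ]
  rw [sum_congr rfl fiber, sum_const, smul_eq_mul, card_injective_eq_descFactorial,
    Fintype.card_coe]

variable [Nonempty α] [MeasurableSpace α] [MeasurableSingletonClass α]

theorem integral_pi_uniformOfFintype (f : (ι → α) → ℝ) :
    ∫ ω, f ω ∂(Measure.pi fun _ : ι => (PMF.uniformOfFintype α).toMeasure) =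
      (∑ ω, f ω) / card α ^ card ι := by
  rw [integral_fintype .of_finite, sum_div]
  refine sum_congr rfl fun ω _ => ?_
  simp [measureReal_def, div_eq_inv_mul]

/-- If `card α < #s`, the truncated subtraction `card α - #s` is harmless: the descending
factorial vanishes. -/
theorem integral_forall_mem_isIsolated (s : Finset ι) :
    ∫ ω, (if ∀ i ∈ s, IsIsolated ω i then 1 else 0)
        ∂(Measure.pi fun _ : ι => (PMF.uniformOfFintype α).toMeasure) =
      (card α).descFactorial #s / card α ^ #s * (1 - #s / card α : ℝ) ^ (card ι - #s) := by
  have hm : (card α : ℝ) ≠ 0 := Nat.cast_ne_zero.2 card_ne_zero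
  rw [integral_pi_uniformOfFintype, sum_boole, card_forall_mem_isIsolated, one_sub_div hm,
    div_pow, div_mul_div_comm, ← pow_add, Nat.add_sub_cancel' (card_le_univ s)]
  rcases le_or_gt #s (card α) with hs | hs
  · rw [Nat.cast_mul, Nat.cast_pow, Nat.cast_sub hs]
  · simp [Nat.descFactorial_eq_zero_iff_lt.mpr hs]

theorem integral_isIsolated (i : ι) :
    ∫ ω, (if IsIsolated ω i then 1 else 0)
        ∂(Measure.pi fun _ : ι => (PMF.uniformOfFintype α).toMeasure) =
      (1 - 1 / card α : ℝ) ^ (card ι - 1) := by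
  have hm : (card α : ℝ) ≠ 0 := Nat.cast_ne_zero.2 card_ne_zero
  simpa [hm] using integral_forall_mem_isIsolated (α := α) {i}

theorem integral_isIsolated_and_isIsolated {i j : ι} (hij : i ≠ j) :
    ∫ ω, (if IsIsolated ω i ∧ IsIsolated ω j then 1 else 0)
        ∂(Measure.pi fun _ : ι => (PMF.uniformOfFintype α).toMeasure) =
      (1 - 1 / card α : ℝ) * (1 - 2 / card α : ℝ) ^ (card ι - 2) := by
  have hm : (card α : ℝ) ≠ 0 := Nat.cast_ne_zero.2 card_ne_zero
  have pair := integral_forall_mem_isIsolated (α := α) {i, j}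
  simp only [mem_insert, mem_singleton, forall_eq_or_imp, forall_eq, card_pair hij,
    Nat.descFactorial_succ, tsub_zero, Nat.descFactorial_zero, mul_one, Nat.cast_mul,
    Nat.cast_ofNat] at pair
  rw [pair, Nat.cast_pred card_pos]
  congr 1
  field_simp

theorem integral_numIsolated :
    ∫ ω, numIsolated ω ∂(Measure.pi fun _ : ι => (PMF.uniformOfFintype α).toMeasure) =
      card ι * (1 - 1 / card α : ℝ) ^ (card ι - 1) := by
  simp_rw [numIsolated, integral_finsetSum _ fun _ _ => Integrable.of_finite, integral_isIsolated,
    sum_const, card_univ, nsmul_eq_mul]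

theorem integral_numIsolated_sq :
    ∫ ω, numIsolated ω ^ 2 ∂(Measure.pi fun _ : ι => (PMF.uniformOfFintype α).toMeasure) =
      card ι * (1 - 1 / card α : ℝ) ^ (card ι - 1) +
        card ι * (card ι - 1) * (1 - 1 / card α) * (1 - 2 / card α : ℝ) ^ (card ι - 2) := by
  have row : ∀ i : ι, ∑ j, ∫ ω, (if IsIsolated ω i ∧ IsIsolated ω j then (1 : ℝ) else 0)
        ∂(Measure.pi fun _ : ι => (PMF.uniformOfFintype α).toMeasure) =
      (1 - 1 / card α : ℝ) ^ (card ι - 1) +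
        (card ι - 1) * ((1 - 1 / card α) * (1 - 2 / card α : ℝ) ^ (card ι - 2)) := by
    intro i
    rw [← add_sum_erase _ _ (mem_univ i), Finset.sum_congr rfl fun j hj =>
      integral_isIsolated_and_isIsolated (ne_of_mem_erase hj).symm]
    simp only [and_self, integral_isIsolated, sum_const, card_erase_of_mem (mem_univ i),
      card_univ, nsmul_eq_mul, Nat.cast_pred (card_pos_iff.2 ⟨i⟩)]
  simp_rw [numIsolated_sq, integral_finsetSum _ fun _ _ => Integrable.of_finite, row, sum_const,
    card_univ, nsmul_eq_mul]
  ring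

theorem urn_nonisolated_mean_variance_general (n m : ℕ) [NeZero m] :
    (∫ ω, nonIsolated n m ω
        ∂(Measure.pi fun _ : Fin n => (PMF.uniformOfFintype (Fin m)).toMeasure)) =
      n * (1 - (1 - 1 / (m : ℝ)) ^ (n - 1)) ∧
    (∫ ω, (nonIsolated n m ω - n * (1 - (1 - 1 / (m : ℝ)) ^ (n - 1))) ^ 2
        ∂(Measure.pi fun _ : Fin n => (PMF.uniformOfFintype (Fin m)).toMeasure)) =
      n * (1 - 1 / (m : ℝ)) ^ (n - 1) +
        ((m : ℝ) - 1) * n * (n - 1) / m * (1 - 2 / (m : ℝ)) ^ (n - 2) -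
        (n : ℝ) ^ 2 * (1 - 1 / (m : ℝ)) ^ (2 * n - 2) := by
  set μ := Measure.pi fun _ : Fin n => (PMF.uniformOfFintype (Fin m)).toMeasure
  have hY : nonIsolated n m = fun ω => n - numIsolated ω := funext nonIsolated_eq_sub_numIsolated
  have hZ_mean := integral_numIsolated (ι := Fin n) (α := Fin m)
  have hZ_sq := integral_numIsolated_sq (ι := Fin n) (α := Fin m)
  simp only [Fintype.card_fin] at hZ_mean hZ_sq
  have mean : ∫ ω, nonIsolated n m ω ∂μ = n * (1 - (1 - 1 / (m : ℝ)) ^ (n - 1)) := by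
    rw [hY, integral_sub (integrable_const _) .of_finite, integral_const, hZ_mean]
    simp only [probReal_univ, smul_eq_mul, one_mul]
    ring
  refine ⟨mean, ?_⟩
  rw [← mean, ← variance_eq_integral .of_discrete, hY, variance_const_sub .of_discrete,
    variance_eq_sub .of_discrete, hZ_mean, Pi.pow_def, hZ_sq,
    show 2 * n - 2 = (n - 1) * 2 by omega, pow_mul]
  have hm : (m : ℝ) ≠ 0 := Nat.cast_ne_zero.2 (NeZero.ne m)
  field_simp

/-- Mean and variance of the number of non-isolated balls when `n` balls are thrown
independently and uniformly into `m` urns. -/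
theorem urn_nonisolated_mean_variance (n m : ℕ) [NeZero m] (hn : 1 ≤ n) :
    (∫ ω, nonIsolated n m ω
        ∂(Measure.pi fun _ : Fin n => (PMF.uniformOfFintype (Fin m)).toMeasure)) =
      n * (1 - (1 - 1 / (m : ℝ)) ^ (n - 1)) ∧
    (∫ ω, (nonIsolated n m ω - n * (1 - (1 - 1 / (m : ℝ)) ^ (n - 1))) ^ 2
        ∂(Measure.pi fun _ : Fin n => (PMF.uniformOfFintype (Fin m)).toMeasure)) =
      n * (1 - 1 / (m : ℝ)) ^ (n - 1) +
        ((m : ℝ) - 1) * n * (n - 1) / m * (1 - 2 / (m : ℝ)) ^ (n - 2) -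
        (n : ℝ) ^ 2 * (1 - 1 / (m : ℝ)) ^ (2 * n - 2) :=
  urn_nonisolated_mean_variance_general n m
end

section
/- In the uniform urn allocation model with n balls and m urns where n/m → α ∈ (0,∞) as n,m → ∞, the variance σ² of the number of non-isolated balls satisfies σ²/n → e^{-α} - e^{-2α}(α² - α + 1), and this limit is strictly positive for all α ∈ (0,∞). -/
/-!
With `q = 1 - 1/m` and `b = 1 - 2/m`, the last two terms of `σ²/n` are each of order `n` and
nearly cancel: what survives is `n (q^{2(n-1)} - b^{n-1})`, and since `q² - b = 1/m²` the
geometric-sum bounds `(n-1) b^{n-2} ≤ m² (q^{2(n-1)} - b^{n-1}) ≤ (n-1) q^{2(n-2)}` squeeze it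
to `α² e^{-2α}`. Everything else is a power `(1 - c/m)^{n-j} → e^{-cα}`. The limit equals
`e^{-2α} (e^α - (α² - α + 1))`, positive because `e^α ≥ 1 + α + α²/2 + α³/6`.
-/

open Filter

/-- The variance of the number of non-isolated balls with `n` balls and `m` urns. -/
noncomputable def urnVar (n m : ℕ) : ℝ :=
  n * (1 - 1 / (m : ℝ)) ^ (n - 1) +
    ((m : ℝ) - 1) * n * (n - 1) / m * (1 - 2 / (m : ℝ)) ^ (n - 2) -
    (n : ℝ) ^ 2 * (1 - 1 / (m : ℝ)) ^ (2 * n - 2)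

open Real Topology

theorem sub_mul_mul_pow_le_pow_sub_pow {R : Type*} [CommRing R] [LinearOrder R]
    [IsStrictOrderedRing R] {a b : R} (hb : 0 ≤ b) (hab : b ≤ a) (n : ℕ) :
    (a - b) * n * b ^ (n - 1) ≤ a ^ n - b ^ n := by
  rw [← geom_sum₂_mul, mul_assoc, mul_comm _ (a - b)]
  refine mul_le_mul_of_nonneg_left ?_ (sub_nonneg.2 hab)
  calc (n : R) * b ^ (n - 1) = ∑ _i ∈ Finset.range n, b ^ (n - 1) := by simp
    _ ≤ ∑ i ∈ Finset.range n, a ^ i * b ^ (n - 1 - i) := by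
      refine Finset.sum_le_sum fun i hi => ?_
      have hi : i ≤ n - 1 := Nat.le_sub_one_of_lt (Finset.mem_range.1 hi)
      calc b ^ (n - 1) = b ^ i * b ^ (n - 1 - i) := by rw [← pow_add, Nat.add_sub_cancel' hi]
        _ ≤ a ^ i * b ^ (n - 1 - i) := by gcongr

theorem pow_sub_pow_le_sub_mul_mul_pow {R : Type*} [CommRing R] [LinearOrder R]
    [IsStrictOrderedRing R] {a b : R} (hb : 0 ≤ b) (hab : b ≤ a) (n : ℕ) :
    a ^ n - b ^ n ≤ (a - b) * n * a ^ (n - 1) := by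
  have ha : 0 ≤ a := hb.trans hab
  simpa [abs_of_nonneg ha, abs_of_nonneg hb, abs_of_nonneg (sub_nonneg.2 hab), hab]
    using (le_abs_self _).trans (abs_pow_sub_pow_le a b n)

theorem urnVar_div_eq {n m : ℕ} (hn : 2 ≤ n) (hm : m ≠ 0) :
    urnVar n m / n = (1 - 1 / m) ^ (n - 1) - (1 - 2 / m) ^ (n - 2) +
      (n + 1) / m * (1 - 2 / m) ^ (n - 2) -
      n * (((1 - 1 / m) ^ 2) ^ (n - 1) - (1 - 2 / m) ^ (n - 1)) := by
  have hpow₁ : 2 * n - 2 = 2 * (n - 1) := by omega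
  have hpow₂ : n - 1 = n - 2 + 1 := by omega
  rw [urnVar, hpow₁, pow_mul, hpow₂, pow_succ (1 - 2 / (m : ℝ))]
  field_simp
  ring

section Asymptotics

variable {ι : Type*} {l : Filter ι} {N : ι → ℕ} {M : ι → ℝ} {α : ℝ}

theorem tendsto_natCast_sub_div (hM : Tendsto M l atTop)
    (hNM : Tendsto (fun i => (N i : ℝ) / M i) l (𝓝 α)) (j : ℕ) :
    Tendsto (fun i => ((N i - j : ℕ) : ℝ) / M i) l (𝓝 α) := by
  have hlower : Tendsto (fun i => (N i : ℝ) / M i - j / M i) l (𝓝 α) := by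
    simpa using hNM.sub (tendsto_const_nhds.div_atTop hM)
  refine tendsto_of_tendsto_of_tendsto_of_le_of_le' hlower hNM ?_ ?_ <;>
    filter_upwards [hM.eventually_gt_atTop 0] with i hi
  · rw [← sub_div]
    gcongr
    have hle : (N i : ℝ) ≤ ((N i - j : ℕ) : ℝ) + j := by
      exact_mod_cast (by omega : N i ≤ N i - j + j)
    linarith
  · gcongr
    exact_mod_cast Nat.sub_le _ _

theorem tendsto_one_sub_div_pow (hM : Tendsto M l atTop)
    (hNM : Tendsto (fun i => (N i : ℝ) / M i) l (𝓝 α)) (c : ℝ) :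
    Tendsto (fun i => (1 - c / M i) ^ N i) l (𝓝 (exp (-(c * α)))) := by
  have hlog : Tendsto (fun i => N i / M i * (M i * log (1 + -c / M i))) l (𝓝 (α * -c)) :=
    hNM.mul ((tendsto_mul_log_one_add_div_atTop (-c)).comp hM)
  rw [show -(c * α) = α * -c by ring]
  refine ((continuous_exp.tendsto _).comp hlog).congr' ?_
  filter_upwards [hM.eventually_gt_atTop (max c 0)] with i hi
  have hMpos : 0 < M i := (le_max_right _ _).trans_lt hi
  have hbase : 0 < 1 - c / M i := by
    rw [sub_pos, div_lt_one hMpos]; exact (le_max_left _ _).trans_lt hi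
  have hexponent : N i / M i * (M i * log (1 + -c / M i)) = N i * log (1 - c / M i) := by
    field_simp; ring_nf
  rw [Function.comp_apply, hexponent, exp_nat_mul, exp_log hbase]

variable {n m : ι → ℕ}

theorem tendsto_natCast_mul_pow_sub_pow (hm : Tendsto (fun i => (m i : ℝ)) l atTop)
    (hratio : Tendsto (fun i => (n i : ℝ) / m i) l (𝓝 α)) :
    Tendsto (fun i => (n i : ℝ) * (((1 - 1 / m i) ^ 2) ^ (n i - 1) - (1 - 2 / m i) ^ (n i - 1)))
      l (𝓝 (α ^ 2 * exp (-(2 * α)))) := by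
  have hn₁ := tendsto_natCast_sub_div hm hratio 1
  have hn₂ := tendsto_natCast_sub_div hm hn₁ 1
  have hlower : Tendsto
      (fun i => (n i : ℝ) / m i * ((n i - 1 : ℕ) / m i) * (1 - 2 / m i) ^ (n i - 1 - 1))
      l (𝓝 (α ^ 2 * exp (-(2 * α)))) := by
    simpa [sq] using (hratio.mul hn₁).mul (tendsto_one_sub_div_pow hm hn₂ 2)
  have hupper : Tendsto
      (fun i => (n i : ℝ) / m i * ((n i - 1 : ℕ) / m i) * ((1 - 1 / m i) ^ (n i - 1 - 1)) ^ 2)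
      l (𝓝 (α ^ 2 * exp (-(2 * α)))) := by
    convert (hratio.mul hn₁).mul ((tendsto_one_sub_div_pow hm hn₂ 1).pow 2) using 2
    rw [sq α, ← exp_nat_mul]
    ring_nf
  refine tendsto_of_tendsto_of_tendsto_of_le_of_le' hlower hupper ?_ ?_ <;>
    filter_upwards [hm.eventually_ge_atTop 2] with i hi
  all_goals
    set q : ℝ := 1 - 1 / m i
    set b : ℝ := 1 - 2 / m i
    have hgap : q ^ 2 - b = 1 / (m i : ℝ) ^ 2 := by
      simp only [q, b]; field_simp; ring
    have hb : 0 ≤ b := by rw [sub_nonneg, div_le_one (by linarith)]; exact hi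
    have hbq : b ≤ q ^ 2 := sub_nonneg.1 (hgap ▸ by positivity)
  · calc (n i : ℝ) / m i * ((n i - 1 : ℕ) / m i) * b ^ (n i - 1 - 1)
        = n i * ((q ^ 2 - b) * (n i - 1 : ℕ) * b ^ (n i - 1 - 1)) := by rw [hgap]; ring
      _ ≤ n i * ((q ^ 2) ^ (n i - 1) - b ^ (n i - 1)) := by
        gcongr; exact sub_mul_mul_pow_le_pow_sub_pow hb hbq _
  · calc n i * ((q ^ 2) ^ (n i - 1) - b ^ (n i - 1))
        ≤ n i * ((q ^ 2 - b) * (n i - 1 : ℕ) * (q ^ 2) ^ (n i - 1 - 1)) := by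
          gcongr; exact pow_sub_pow_le_sub_mul_mul_pow hb hbq _
      _ = (n i : ℝ) / m i * ((n i - 1 : ℕ) / m i) * (q ^ (n i - 1 - 1)) ^ 2 := by
        rw [hgap, ← pow_mul, ← pow_mul, mul_comm 2]; ring

end Asymptotics

theorem sq_sub_add_one_lt_exp {x : ℝ} (hx : 0 < x) : x ^ 2 - x + 1 < exp x := by
  have hcubic : 1 + x + x ^ 2 / 2 + x ^ 3 / 6 ≤ exp x := by
    simpa [Finset.sum_range_succ, Nat.factorial] using sum_le_exp_of_nonneg hx.le 4
  nlinarith [sq_nonneg (x - 3 / 2), mul_pos hx hx]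

/-- If `n/m → α ∈ (0,∞)`, then the variance `σ²` of the number of non-isolated balls
satisfies `σ²/n → e^{-α} - e^{-2α}(α² - α + 1) > 0`. -/
theorem urn_variance_limit (n m : ℕ → ℕ) (α : ℝ) (hα : 0 < α)
    (hn : Tendsto n atTop atTop) (hm : Tendsto m atTop atTop)
    (hratio : Tendsto (fun k => (n k : ℝ) / (m k : ℝ)) atTop (nhds α)) :
    Tendsto (fun k => urnVar (n k) (m k) / (n k : ℝ)) atTop
      (nhds (Real.exp (-α) - Real.exp (-2 * α) * (α ^ 2 - α + 1))) ∧
    0 < Real.exp (-α) - Real.exp (-2 * α) * (α ^ 2 - α + 1) := by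
  constructor
  · have hM : Tendsto (fun k => (m k : ℝ)) atTop atTop := tendsto_natCast_atTop_atTop.comp hm
    have hA := tendsto_one_sub_div_pow hM (tendsto_natCast_sub_div hM hratio 1) 1
    have hB := tendsto_one_sub_div_pow hM (tendsto_natCast_sub_div hM hratio 2) 2
    have hC : Tendsto (fun k => ((n k : ℝ) + 1) / m k) atTop (𝓝 α) := by
      simpa [add_div] using hratio.add ((tendsto_const_nhds (x := (1 : ℝ))).div_atTop hM)
    have hlim := ((hA.sub hB).add (hC.mul hB)).sub (tendsto_natCast_mul_pow_sub_pow hM hratio)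
    rw [show exp (-α) - exp (-2 * α) * (α ^ 2 - α + 1) = exp (-(1 * α)) - exp (-(2 * α)) +
      α * exp (-(2 * α)) - α ^ 2 * exp (-(2 * α)) by ring_nf]
    refine hlim.congr' ?_
    filter_upwards [hn.eventually_ge_atTop 2, hm.eventually_ne_atTop 0] with k hk₂ hk₀
    exact (urnVar_div_eq hk₂ hk₀).symm
  · have hfactor : exp (-α) - exp (-2 * α) * (α ^ 2 - α + 1) =
        exp (-2 * α) * (exp α - (α ^ 2 - α + 1)) := by
      rw [mul_sub, ← exp_add]; ring_nf
    rw [hfactor]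
    exact mul_pos (exp_pos _) (sub_pos.2 (sq_sub_add_one_lt_exp hα))
end

section
/- Let Y be the number of isolated vertices in K_{n,p} with mean μ and variance σ², and let β = (1-p)^{-n}. Then for all t > 0, P((Y - μ)/σ ≤ -t) ≤ exp(-(t²/2) · σ²/(μ(β+1))). -/
open scoped Classical
open MeasureTheory Finset

/-- The number of isolated vertices of a graph on `Fin n` described by its indicator
of edges `ω` (indexed by ordered pairs `e.1.1 < e.1.2`). -/
noncomputable def isolatedCount (n : ℕ) (ω : {e : Fin n × Fin n // e.1 < e.2} → Bool) : ℝ :=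
  ∑ v : Fin n,
    if ∀ e : {e : Fin n × Fin n // e.1 < e.2}, (e.1.1 = v ∨ e.1.2 = v) → ω e = false
    then 1 else 0

/-- The Erdős–Rényi measure: each of the `n(n-1)/2` possible edges is present
independently with probability `p`. -/
noncomputable def erGraphMeasure (n : ℕ) (p : ℝ) (hp1 : p < 1) :
    Measure ({e : Fin n × Fin n // e.1 < e.2} → Bool) :=
  Measure.pi fun _ =>
    (PMF.bernoulli (Real.toNNReal p) (Real.toNNReal_le_one.mpr hp1.le)).toMeasure

/-! Write `Y` for the number of isolated vertices and `Yᵥ` for that number after deleting the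
edges at `v`. The event that `v` is isolated depends only on the edges at `v`, while `Yᵥ` depends
only on the other edges, so `E[1{v isolated} f(Y)] = (1-p)^(n-1) E[f(Yᵥ)]` and hence
`E[Y f(Y)] = μ E[f(Y_V)]` for a uniform vertex `V`: this is the size-bias coupling, with `Y_V ≥ Y`.
Deleting the edges at `v` isolates a non-isolated vertex `u` only if `v` is an endpoint of a
fixed edge at `u`, so `∑ᵥ (Yᵥ - Y) ≤ 2n`. With `eˣ ≥ 1 + x` this gives, for `θ ≤ 0`,
`m'(θ) ≥ μ(1 + 2θ) m(θ)` for the moment generating function `m` of `Y`, hence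
`m(θ) ≤ exp(μθ + μθ²)`, and the Chernoff bound at `θ = -x/(2μ)` yields
`P(Y ≤ μ - x) ≤ exp(-x²/(4μ))`, which is at most the claimed bound because `β ≥ 1`. -/

open ProbabilityTheory Real

theorem exp_mul_mul_le_sum_exp_of_sum_sub_le {ι : Type*} (s : Finset ι) (f : ι → ℝ)
    {θ y K : ℝ} (hθ : θ ≤ 0) (hK : ∑ i ∈ s, (f i - y) ≤ K) :
    exp (θ * y) * (#s + θ * K) ≤ ∑ i ∈ s, exp (θ * f i) := by
  calc exp (θ * y) * (#s + θ * K)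
      ≤ exp (θ * y) * (#s + θ * ∑ i ∈ s, (f i - y)) := by
        have hθK := mul_le_mul_of_nonpos_left hK hθ
        gcongr
    _ = ∑ i ∈ s, exp (θ * y) * (θ * (f i - y) + 1) := by
        rw [← Finset.mul_sum, Finset.sum_add_distrib, ← Finset.mul_sum]
        simp [add_comm]
    _ ≤ ∑ i ∈ s, exp (θ * f i) := by
        gcongr with i
        calc exp (θ * y) * (θ * (f i - y) + 1) ≤ exp (θ * y) * exp (θ * (f i - y)) := by
              gcongr
              exact add_one_le_exp _
          _ = exp (θ * f i) := by
              rw [← exp_add]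
              congr 1
              ring

theorem mul_exp_neg_le_of_hasDerivAt {m m' g g' : ℝ → ℝ} {a b : ℝ} (hab : a ≤ b)
    (hm : ∀ x, HasDerivAt m (m' x) x) (hg : ∀ x, HasDerivAt g (g' x) x)
    (hle : ∀ x ∈ Set.Ioo a b, g' x * m x ≤ m' x) :
    m a * exp (-g a) ≤ m b * exp (-g b) := by
  have hderiv : ∀ x, HasDerivAt (fun x => m x * exp (-g x))
      ((m' x - g' x * m x) * exp (-g x)) x := fun x =>
    ((hm x).mul (hg x).neg.exp).congr_deriv (by simp only [Pi.neg_apply]; ring)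
  refine monotoneOn_of_hasDerivWithinAt_nonneg (convex_Icc a b)
    (fun x _ => (hderiv x).continuousAt.continuousWithinAt)
    (fun x _ => (hderiv x).hasDerivWithinAt) (fun x hx => ?_)
    (Set.left_mem_Icc.mpr hab) (Set.right_mem_Icc.mpr hab) hab
  rw [interior_Icc] at hx
  exact mul_nonneg (sub_nonneg.mpr (hle x hx)) (exp_pos _).le

section Moments

variable {Ω : Type*} [MeasurableSpace Ω] {P : Measure Ω} {X : Ω → ℝ} {m v : ℝ}

theorem mgf_le_exp_of_mul_mgf_le [IsProbabilityMeasure P]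
    (hint : ∀ θ, Integrable (fun ω => exp (θ * X ω)) P)
    (hX : ∀ θ ≤ 0, (m + 2 * v * θ) * mgf X P θ ≤ P[fun ω => X ω * exp (θ * X ω)])
    {θ : ℝ} (hθ : θ ≤ 0) :
    mgf X P θ ≤ exp (m * θ + v * θ ^ 2) := by
  have hmgf : ∀ x, HasDerivAt (mgf X P) P[fun ω => X ω * exp (x * X ω)] x := fun x =>
    hasDerivAt_mgf (by simp [integrableExpSet, hint])
  have hg : ∀ x, HasDerivAt (fun x => m * x + v * x ^ 2) (m + 2 * v * x) x := fun x =>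
    (((hasDerivAt_id' x).const_mul m).add ((hasDerivAt_pow 2 x).const_mul v)).congr_deriv
      (by push_cast; ring)
  have hmono := mul_exp_neg_le_of_hasDerivAt hθ hmgf hg fun x hx => hX x hx.2.le
  simp only [mgf_zero, mul_zero, zero_pow two_ne_zero, add_zero, neg_zero, exp_zero,
    mul_one, exp_neg] at hmono
  rwa [mul_inv_le_iff₀ (exp_pos _), one_mul] at hmono

theorem measureReal_le_sub_le_exp_of_mgf_le [IsFiniteMeasure P]
    (hint : ∀ θ, Integrable (fun ω => exp (θ * X ω)) P) (hv : 0 < v)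
    (hmgf : ∀ θ ≤ 0, mgf X P θ ≤ exp (m * θ + v * θ ^ 2)) {x : ℝ} (hx : 0 ≤ x) :
    P.real {ω | X ω ≤ m - x} ≤ exp (-x ^ 2 / (4 * v)) := by
  have hθ : -x / (2 * v) ≤ 0 := div_nonpos_of_nonpos_of_nonneg (by linarith) (by positivity)
  calc P.real {ω | X ω ≤ m - x}
      ≤ exp (-(-x / (2 * v)) * (m - x)) * mgf X P (-x / (2 * v)) :=
        measure_le_le_exp_mul_mgf _ hθ (hint _)
    _ ≤ exp (-(-x / (2 * v)) * (m - x)) *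
          exp (m * (-x / (2 * v)) + v * (-x / (2 * v)) ^ 2) := by
        gcongr
        exact hmgf _ hθ
    _ = exp (-x ^ 2 / (4 * v)) := by
        rw [← exp_add]
        congr 1
        field_simp
        ring

end Moments

section ProductIndependence

variable {ι : Type*} [Fintype ι] {α : ι → Type*} [∀ i, MeasurableSpace (α i)]
  [∀ i, Countable (α i)] [∀ i, MeasurableSingletonClass (α i)]
  {ν : ∀ i, Measure (α i)} [∀ i, IsProbabilityMeasure (ν i)]

theorem integral_pi_mul_of_dependsOn_compl {f g : (∀ i, α i) → ℝ} {s : Finset ι}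
    (hf : DependsOn f s) (hg : DependsOn g (↑s)ᶜ) :
    ∫ x, f x * g x ∂Measure.pi ν = (∫ x, f x ∂Measure.pi ν) * ∫ x, g x ∂Measure.pi ν := by
  obtain ⟨F, rfl⟩ := dependsOn_iff_exists_comp.mp hf
  obtain ⟨G, rfl⟩ := dependsOn_iff_exists_comp.mp (hg.mono (Finset.coe_compl s).ge)
  have hind := (iIndepFun_pi (X := fun i (x : α i) => x) (μ := ν)
    fun i => measurable_id.aemeasurable).indepFun_finset s sᶜ disjoint_compl_right
    fun i => measurable_pi_apply i
  exact (hind.comp (Measurable.of_discrete (f := F)) (Measurable.of_discrete (f := G))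
    ).integral_fun_mul_eq_mul_integral Measurable.of_discrete.aestronglyMeasurable
    Measurable.of_discrete.aestronglyMeasurable

end ProductIndependence

namespace ErdosRenyi

abbrev Edge (n : ℕ) := {e : Fin n × Fin n // e.1 < e.2}

variable {n : ℕ}

instance {p : ℝ} (hp1 : p < 1) : IsProbabilityMeasure (erGraphMeasure n p hp1) := by
  unfold erGraphMeasure
  infer_instance

def incidentEdges (v : Fin n) : Finset (Edge n) := {e | e.1.1 = v ∨ e.1.2 = v}

def isolated (v : Fin n) : Set (Edge n → Bool) := Set.pi (incidentEdges v) fun _ => {false}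

@[simp]
theorem mem_isolated {v : Fin n} {ω : Edge n → Bool} :
    ω ∈ isolated v ↔ ∀ e ∈ incidentEdges v, ω e = false := by
  simp [isolated, Set.mem_pi]

def isolateVertex (v : Fin n) (ω : Edge n → Bool) : Edge n → Bool :=
  fun e => if e ∈ incidentEdges v then false else ω e

theorem isolatedCount_eq_sum_indicator (ω : Edge n → Bool) :
    isolatedCount n ω = ∑ v, (isolated v).indicator 1 ω := by
  simp [isolatedCount, incidentEdges, Set.indicator_apply]

theorem isolateVertex_of_mem_isolated {v : Fin n} {ω : Edge n → Bool} (h : ω ∈ isolated v) :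
    isolateVertex v ω = ω := by
  funext e
  by_cases he : e ∈ incidentEdges v <;> simp [isolateVertex, he, mem_isolated.mp h e]

theorem isolateVertex_mem_isolated {u v : Fin n} {ω : Edge n → Bool} (h : ω ∈ isolated u) :
    isolateVertex v ω ∈ isolated u :=
  mem_isolated.mpr fun e he => by simp [isolateVertex, mem_isolated.mp h e he]

theorem card_incidentEdges (v : Fin n) : #(incidentEdges v) = n - 1 := by
  rw [show n - 1 = #(univ.erase v) by simp]
  refine Finset.card_bij' (fun e _ => if e.1.1 = v then e.1.2 else e.1.1)
    (fun u hu => if h : u < v then ⟨(u, v), h⟩ else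
      ⟨(v, u), lt_of_le_of_ne (not_lt.mp h) (Finset.ne_of_mem_erase hu).symm⟩) ?_ ?_ ?_ ?_
  · rintro ⟨⟨a, b⟩, hab : a < b⟩ he
    simp only [incidentEdges, Finset.mem_filter, Finset.mem_univ, true_and] at he
    rcases he with rfl | rfl <;> simp [hab.ne, hab.ne']
  · intro u _
    by_cases h : u < v <;> simp [h, incidentEdges]
  · rintro ⟨⟨a, b⟩, hab : a < b⟩ he
    simp only [incidentEdges, Finset.mem_filter, Finset.mem_univ, true_and] at he
    rcases he with rfl | rfl
    · simp [not_lt.mpr hab.le]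
    · simp [hab.ne, hab]
  · intro u hu
    have huv := Finset.ne_of_mem_erase hu
    by_cases h : u < v <;> simp [h, huv]

theorem measureReal_isolated {p : ℝ} (hp0 : 0 ≤ p) (hp1 : p < 1) (v : Fin n) :
    (erGraphMeasure n p hp1).real (isolated v) = (1 - p) ^ (n - 1) := by
  rw [measureReal_def, isolated, ← Set.pi_univ_ite, erGraphMeasure, Measure.pi_pi]
  simp only [apply_ite, measure_univ, Finset.mem_coe, Finset.prod_ite_mem, Finset.univ_inter,
    Finset.prod_const, card_incidentEdges, ENNReal.toReal_pow,
    PMF.toMeasure_apply_singleton _ _ (measurableSet_singleton _)]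
  congr 1
  change ((1 - p.toNNReal : NNReal) : ENNReal).toReal = 1 - p
  rw [ENNReal.coe_toReal, NNReal.coe_sub (Real.toNNReal_le_one.mpr hp1.le), NNReal.coe_one,
    Real.coe_toNNReal _ hp0]

theorem integral_indicator_isolated_mul {p : ℝ} (hp0 : 0 ≤ p) (hp1 : p < 1) (v : Fin n)
    (H : (Edge n → Bool) → ℝ) :
    ∫ ω, (isolated v).indicator 1 ω * H ω ∂erGraphMeasure n p hp1
      = (1 - p) ^ (n - 1) * ∫ ω, H (isolateVertex v ω) ∂erGraphMeasure n p hp1 := by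
  have hswap : ∀ ω, (isolated v).indicator 1 ω * H ω
      = (isolated v).indicator 1 ω * H (isolateVertex v ω) := by
    intro ω
    by_cases h : ω ∈ isolated v <;> simp [h, isolateVertex_of_mem_isolated]
  have hdep :
      DependsOn ((isolated v).indicator (1 : (Edge n → Bool) → ℝ)) (incidentEdges v) := by
    intro x y hxy
    have : x ∈ isolated v ↔ y ∈ isolated v := by
      simp only [mem_isolated]
      exact forall₂_congr fun e he => by rw [hxy e he]
    simp only [Set.indicator_apply, this, Pi.one_apply]
  have hdep' : DependsOn (fun ω => H (isolateVertex v ω)) (↑(incidentEdges v))ᶜ := by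
    intro x y hxy
    refine congrArg H (funext fun e => ?_)
    by_cases he : e ∈ incidentEdges v
    · simp [isolateVertex, he]
    · simp [isolateVertex, he, hxy e he]
  simp_rw [hswap]
  calc _ = (∫ ω, (isolated v).indicator 1 ω ∂erGraphMeasure n p hp1) *
        ∫ ω, H (isolateVertex v ω) ∂erGraphMeasure n p hp1 :=
      integral_pi_mul_of_dependsOn_compl hdep hdep'
    _ = _ := by rw [integral_indicator_one MeasurableSet.of_discrete, measureReal_isolated hp0]

theorem sum_indicator_isolated_isolateVertex_sub_le (ω : Edge n → Bool) (u : Fin n) :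
    ∑ v, ((isolated u).indicator (1 : (Edge n → Bool) → ℝ) (isolateVertex v ω)
      - (isolated u).indicator 1 ω) ≤ 2 := by
  by_cases hu : ω ∈ isolated u
  · simp [Set.indicator_of_mem hu, Set.indicator_of_mem (isolateVertex_mem_isolated hu)]
  obtain ⟨e, he, hωe⟩ : ∃ e ∈ incidentEdges u, ω e = true := by simpa using hu
  -- isolating `u` in `isolateVertex v ω` requires deleting `e`, so `v` is an endpoint of `e`
  have hsub : ({v | isolateVertex v ω ∈ isolated u} : Finset (Fin n)) ⊆ {e.1.1, e.1.2} := by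
    intro v hv
    have hev := mem_isolated.mp (Finset.mem_filter.mp hv).2 e he
    simp only [isolateVertex, hωe, ite_eq_left_iff, Bool.true_eq_false, imp_false, not_not,
      incidentEdges, Finset.mem_filter, Finset.mem_univ, true_and] at hev
    simpa [eq_comm] using hev
  simp only [Set.indicator_of_notMem hu, sub_zero, Set.indicator_apply, Pi.one_apply]
  rw [Finset.sum_boole]
  exact_mod_cast (Finset.card_le_card hsub).trans Finset.card_le_two

theorem sum_isolatedCount_isolateVertex_sub_le (ω : Edge n → Bool) :
    ∑ v, (isolatedCount n (isolateVertex v ω) - isolatedCount n ω) ≤ 2 * n := by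
  simp_rw [isolatedCount_eq_sum_indicator, ← Finset.sum_sub_distrib]
  rw [Finset.sum_comm]
  calc _ ≤ ∑ _u : Fin n, (2 : ℝ) :=
        Finset.sum_le_sum fun u _ => sum_indicator_isolated_isolateVertex_sub_le ω u
    _ = 2 * n := by simp [mul_comm]

theorem mul_mgf_isolatedCount_le_integral {p : ℝ} (hp0 : 0 ≤ p) (hp1 : p < 1) {θ : ℝ}
    (hθ : θ ≤ 0) :
    (n * (1 - p) ^ (n - 1) + 2 * (n * (1 - p) ^ (n - 1)) * θ) *
        mgf (isolatedCount n) (erGraphMeasure n p hp1) θ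
      ≤ ∫ ω, isolatedCount n ω * exp (θ * isolatedCount n ω) ∂erGraphMeasure n p hp1 := by
  set P := erGraphMeasure n p hp1
  set Y := isolatedCount n
  have hsizeBias : ∫ ω, Y ω * exp (θ * Y ω) ∂P
      = (1 - p) ^ (n - 1) * ∫ ω, ∑ v, exp (θ * Y (isolateVertex v ω)) ∂P := by
    have hY : ∀ ω, Y ω * exp (θ * Y ω) = ∑ v, (isolated v).indicator 1 ω * exp (θ * Y ω) :=
      fun ω => by rw [← Finset.sum_mul, ← isolatedCount_eq_sum_indicator]
    simp_rw [hY]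
    rw [integral_finsetSum _ fun _ _ => .of_finite, integral_finsetSum _ fun _ _ => .of_finite,
      Finset.mul_sum]
    exact Finset.sum_congr rfl fun v _ =>
      integral_indicator_isolated_mul hp0 hp1 v fun ω => exp (θ * Y ω)
  have hpoint : ∀ ω, exp (θ * Y ω) * (n + θ * (2 * n)) ≤ ∑ v, exp (θ * Y (isolateVertex v ω)) :=
    fun ω => by
      simpa using exp_mul_mul_le_sum_exp_of_sum_sub_le Finset.univ _ hθ
        (sum_isolatedCount_isolateVertex_sub_le ω)
  have hq : 0 ≤ (1 - p) ^ (n - 1) := pow_nonneg (by linarith) _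
  calc _ = (1 - p) ^ (n - 1) * ∫ ω, exp (θ * Y ω) * (n + θ * (2 * n)) ∂P := by
        rw [mgf, integral_mul_const]
        ring
    _ ≤ (1 - p) ^ (n - 1) * ∫ ω, ∑ v, exp (θ * Y (isolateVertex v ω)) ∂P :=
        mul_le_mul_of_nonneg_left (integral_mono .of_finite .of_finite hpoint) hq
    _ = _ := hsizeBias.symm

end ErdosRenyi

/-- Left tail bound for the number `Y` of isolated vertices of `K_{n,p}`:
`P((Y-μ)/σ ≤ -t) ≤ exp(-(t²/2)·σ²/(μ(β+1)))` with `β = (1-p)^{-n}`. -/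
theorem erdos_renyi_isolated_left_tail (n : ℕ) (hn : 1 ≤ n)
    (p : ℝ) (hp0 : 0 < p) (hp1 : p < 1) (μ σ β : ℝ)
    (hμ : μ = n * (1 - p) ^ (n - 1))
    (hσ : σ = Real.sqrt (n * (1 - p) ^ (n - 1) *
      (1 + n * p * (1 - p) ^ (n - 2) - (1 - p) ^ (n - 2))))
    (hβ : β = (1 - p) ^ (-(n : ℤ))) :
    ∀ t > (0 : ℝ),
      ((erGraphMeasure n p hp1) {ω | (isolatedCount n ω - μ) / σ ≤ -t}).toReal ≤
        Real.exp (-(t ^ 2 / 2) * (σ ^ 2 / (μ * (β + 1)))) := by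
  intro t ht
  have hq : 0 < 1 - p := by linarith
  have hμ0 : 0 < μ := hμ ▸ by positivity
  have hβ1 : 1 ≤ β := by
    rw [hβ, zpow_neg, zpow_natCast]
    exact one_le_inv₀ (by positivity) |>.mpr (pow_le_one₀ hq.le (by linarith))
  have hσ0 : 0 ≤ σ := hσ ▸ Real.sqrt_nonneg _
  have hint : ∀ θ, Integrable (fun ω => exp (θ * isolatedCount n ω)) (erGraphMeasure n p hp1) :=
    fun _ => .of_finite
  have hmgf : ∀ θ ≤ 0, mgf (isolatedCount n) (erGraphMeasure n p hp1) θ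
      ≤ exp (μ * θ + μ * θ ^ 2) := fun θ hθ =>
    mgf_le_exp_of_mul_mgf_le hint
      (fun θ hθ => hμ ▸ ErdosRenyi.mul_mgf_isolatedCount_le_integral hp0.le hp1 hθ) hθ
  have htail :
      {ω | (isolatedCount n ω - μ) / σ ≤ -t} ⊆ {ω | isolatedCount n ω ≤ μ - t * σ} := by
    intro ω hω
    rcases hσ0.eq_or_lt with h | h
    · simp [← h] at hω
      linarith
    · rw [Set.mem_ofPred_eq, div_le_iff₀ h] at hω
      show isolatedCount n ω ≤ μ - t * σ
      linarith
  calc _ ≤ (erGraphMeasure n p hp1).real {ω | isolatedCount n ω ≤ μ - t * σ} :=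
        measureReal_mono htail
    _ ≤ exp (-(t * σ) ^ 2 / (4 * μ)) :=
        measureReal_le_sub_le_exp_of_mgf_le hint hμ0 hmgf (by positivity)
    _ ≤ _ := by
        rw [exp_le_exp, neg_mul, neg_div, neg_le_neg_iff, div_mul_div_comm, ← mul_pow]
        exact div_le_div_of_nonneg_left (sq_nonneg _) (by positivity) (by nlinarith)
end
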